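/- arXiv:2506.01684 — 12 statements merged into one kernel-verified Lean document; each statement's English description precedes it below -/
import Mathlib

section
/- Let A, B, T be real numbers with 0 < A < B and T > 0, and set k = (B−A)/T, 𝒯 = T/(AB), and l(t) = B − k·t. Suppose 0 < t₀ < t₁ < T and v₀ > k satisfy the collision relations v₀·(t₁ − t₀) = l(t₀) + l(t₁) and v₁ = v₀ + 2k. Define I(t,v) = 𝒯·(l(t)·v − k·l(t)) and θ(t) = (1/(2𝒯))·∫₀ᵗ l(s)⁻² ds. Then I(t₁,v₁) = I(t₀,v₀) and θ(t₁) = θ(t₀) + 1/I(t₀,v₀). -/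
/-!
Free flight between the collisions reads `(v₀ - k)(t₁ - t₀) = 2 l(t₁)`. Since `l` is affine,
`l(t₁) - l(t₀) = -k (t₁ - t₀)`, and with this relation the change of `I` cancels. For `θ`, the
function `s ↦ (s - t₀) / (l(t₀) l(s))` is an antiderivative of `l⁻²`, so `θ` advances by
`(t₁ - t₀) / (2𝒯 l(t₀) l(t₁))`, which the same relation turns into `1 / I(t₀, v₀)`.
-/

open MeasureTheory intervalIntegral

theorem intervalIntegrable_inv_sq_of_ne_zero {f : ℝ → ℝ} {a b : ℝ} (hf : Continuous f)
    (h : ∀ s ∈ Set.uIcc a b, f s ≠ 0) :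
    IntervalIntegrable (fun s => (f s ^ 2)⁻¹) volume a b :=
  ((hf.continuousOn.pow 2).inv₀ fun s hs => pow_ne_zero 2 (h s hs)).intervalIntegrable

theorem integral_inv_sq_affine {B k a b : ℝ} (h : ∀ s ∈ Set.uIcc a b, B - k * s ≠ 0) :
    ∫ s in a..b, ((B - k * s) ^ 2)⁻¹ = (b - a) / ((B - k * a) * (B - k * b)) := by
  have hderiv : ∀ s ∈ Set.uIcc a b,
      HasDerivAt (fun s => (s - a) / ((B - k * a) * (B - k * s))) ((B - k * s) ^ 2)⁻¹ s := by
    intro s hs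
    have ha := h a Set.left_mem_uIcc
    have hs' := h s hs
    have hden : HasDerivAt (fun s => (B - k * a) * (B - k * s)) ((B - k * a) * -(k * 1)) s :=
      (((hasDerivAt_id' s).const_mul k).const_sub B).const_mul _
    refine (((hasDerivAt_id' s).sub_const a).div hden
      (mul_ne_zero ha hs')).congr_deriv ?_
    field_simp
    ring
  rw [integral_eq_sub_of_hasDerivAt hderiv
    (intervalIntegrable_inv_sq_of_ne_zero (by fun_prop) h)]
  simp

theorem sub_div_mul_pos_of_le {A B T t : ℝ} (hA : 0 < A) (hAB : A ≤ B) (hT : 0 < T)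
    (ht : t ≤ T) : 0 < B - (B - A) / T * t := by
  have hk : 0 ≤ (B - A) / T := div_nonneg (sub_nonneg.2 hAB) hT.le
  have hkT : (B - A) / T * T = B - A := div_mul_cancel₀ _ hT.ne'
  nlinarith [mul_le_mul_of_nonneg_left ht hk]

theorem adiabatic_coordinates_general
    (A B T : ℝ) (hA : 0 < A) (hAB : A < B) (hT : 0 < T)
    (k 𝒯 : ℝ) (hk : k = (B - A) / T)
    (l : ℝ → ℝ) (hl : ∀ t, l t = B - k * t)
    (t₀ t₁ v₀ v₁ : ℝ)
    (ht₀₁ : t₀ < t₁) (ht₁ : t₁ < T)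
    (hcoll : v₀ * (t₁ - t₀) = l t₀ + l t₁)
    (hv₁ : v₁ = v₀ + 2 * k)
    (I : ℝ → ℝ → ℝ) (hI : ∀ t v, I t v = 𝒯 * (l t * v - k * l t))
    (θ : ℝ → ℝ) (hθ : ∀ t, θ t = (1 / (2 * 𝒯)) * ∫ s in (0:ℝ)..t, ((l s) ^ 2)⁻¹) :
    I t₁ v₁ = I t₀ v₀ ∧ θ t₁ = θ t₀ + 1 / I t₀ v₀ := by
  have hl_ne : ∀ a ≤ T, ∀ b ≤ T, ∀ s ∈ Set.uIcc a b, B - k * s ≠ 0 := fun a ha b hb s hs =>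
    (hk ▸ sub_div_mul_pos_of_le hA hAB.le hT (hs.2.trans (max_le ha hb))).ne'
  have hint : ∀ b ≤ T, IntervalIntegrable (fun s => ((B - k * s) ^ 2)⁻¹) volume 0 b :=
    fun b hb => intervalIntegrable_inv_sq_of_ne_zero (by fun_prop) (hl_ne 0 hT.le b hb)
  have hflight : (v₀ - k) * (t₁ - t₀) = 2 * (B - k * t₁) := by
    rw [hl, hl] at hcoll
    linear_combination hcoll
  refine ⟨by rw [hI, hI, hv₁, hl, hl]; linear_combination -𝒯 * k * hflight, ?_⟩
  have hΔθ : θ t₁ - θ t₀ = (t₁ - t₀) / (2 * 𝒯 * (B - k * t₀) * (B - k * t₁)) := by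
    simp only [hθ, hl, ← mul_sub]
    rw [integral_interval_sub_left (hint t₁ ht₁.le) (hint t₀ (ht₀₁.trans ht₁).le),
      integral_inv_sq_affine (hl_ne t₀ (ht₀₁.trans ht₁).le t₁ ht₁.le), div_mul_div_comm,
      one_mul, ← mul_assoc]
  have hI₀ : I t₀ v₀ = 2 * 𝒯 * (B - k * t₀) * (B - k * t₁) / (t₁ - t₀) := by
    rw [hI, hl, eq_div_iff (sub_ne_zero.2 ht₀₁.ne')]
    linear_combination 𝒯 * (B - k * t₀) * hflight
  rw [hI₀, one_div_div, ← hΔθ]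
  ring

/-- Adiabatic coordinates lemma for the piecewise linear Fermi–Ulam accelerator:
the adiabatic momentum `I` is preserved and the adiabatic time `θ` advances by `1/I`
between consecutive collisions during the linear phase `l(t) = B - k t`. -/
theorem adiabatic_coordinates
    (A B T : ℝ) (hA : 0 < A) (hAB : A < B) (hT : 0 < T)
    (k 𝒯 : ℝ) (hk : k = (B - A) / T) (h𝒯 : 𝒯 = T / (A * B))
    (l : ℝ → ℝ) (hl : ∀ t, l t = B - k * t)
    (t₀ t₁ v₀ v₁ : ℝ)
    (ht₀ : 0 < t₀) (ht₀₁ : t₀ < t₁) (ht₁ : t₁ < T)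
    (hv₀ : v₀ > k)
    (hcoll : v₀ * (t₁ - t₀) = l t₀ + l t₁)
    (hv₁ : v₁ = v₀ + 2 * k)
    (I : ℝ → ℝ → ℝ) (hI : ∀ t v, I t v = 𝒯 * (l t * v - k * l t))
    (θ : ℝ → ℝ) (hθ : ∀ t, θ t = (1 / (2 * 𝒯)) * ∫ s in (0:ℝ)..t, ((l s) ^ 2)⁻¹) :
    I t₁ v₁ = I t₀ v₀ ∧ θ t₁ = θ t₀ + 1 / I t₀ v₀ :=
  adiabatic_coordinates_general A B T hA hAB hT k 𝒯 hk l hl t₀ t₁ v₀ v₁ ht₀₁ ht₁ hcoll hv₁ I hI θ hθ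
end

section
/- Let A, B, T be real numbers with 0 < A < B and T > 0, and set k = (B−A)/T and 𝒯 = T/(AB). Suppose tₙ ∈ (0,T), tₙ₊₁ ∈ (T,2T), lₙ = B − k·tₙ, lₙ₊₁ = A + k·(tₙ₊₁ − T), and vₙ is a real number with vₙ·(tₙ₊₁ − tₙ) = lₙ + lₙ₊₁. Define Iₙ = 𝒯·lₙ·(vₙ − k), Iₙ₊₁ = 𝒯·lₙ₊₁·(vₙ − k), and τ̄ = (vₙ − k)·(tₙ₊₁ − T)/(2A). Then Iₙ₊₁ = Iₙ + 2Ak𝒯·(2τ̄ − 1). -/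
/-! The wall profile is `l(t) = A + k |t - T|`, so the lengths at the two impacts satisfy
`lₙ + lₙ₊₁ = 2A + k (tₙ₊₁ - tₙ)` and `lₙ₊₁ - lₙ = k (tₙ₊₁ + tₙ - 2T)`. The first turns the
free-flight relation into `(vₙ - k)(tₙ₊₁ - tₙ) = 2A`: relative to the wall, the ball covers
exactly `2A`. The second makes `Iₙ₊₁ - Iₙ = 𝒯 (vₙ - k)(lₙ₊₁ - lₙ)` a combination of
`(vₙ - k)(tₙ₊₁ - T) = 2Aτ̄` and `(vₙ - k)(tₙ₊₁ - tₙ) = 2A`. -/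

section WallProfile

variable {R : Type*} [CommRing R] {A B T k : R} (tn tn1 : R)

theorem wall_length_add_eq (hkT : k * T = B - A) :
    (B - k * tn) + (A + k * (tn1 - T)) = 2 * A + k * (tn1 - tn) := by
  linear_combination (-1 : R) * hkT

theorem wall_length_sub_eq (hkT : k * T = B - A) :
    (A + k * (tn1 - T)) - (B - k * tn) = k * (tn1 + tn - 2 * T) := by
  linear_combination hkT

theorem relative_speed_mul_flight_time {vn : R} (hkT : k * T = B - A)
    (hfree : vn * (tn1 - tn) = (B - k * tn) + (A + k * (tn1 - T))) :
    (vn - k) * (tn1 - tn) = 2 * A := by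
  linear_combination hfree + wall_length_add_eq tn tn1 hkT

end WallProfile

theorem adiabatic_normal_form_momentum_change_general
    (A B T : ℝ) (hA : 0 < A) (hT : 0 < T)
    (k 𝒯 : ℝ) (hk : k = (B - A) / T)
    (tn tn1 ln ln1 vn : ℝ)
    (hln : ln = B - k * tn) (hln1 : ln1 = A + k * (tn1 - T))
    (hfree : vn * (tn1 - tn) = ln + ln1)
    (In In1 τ' : ℝ)
    (hIn : In = 𝒯 * ln * (vn - k)) (hIn1 : In1 = 𝒯 * ln1 * (vn - k))
    (hτ' : τ' = (vn - k) * (tn1 - T) / (2 * A)) :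
    In1 = In + 2 * A * k * 𝒯 * (2 * τ' - 1) := by
  subst hln hln1 hIn hIn1
  have hkT : k * T = B - A := by rw [hk, div_mul_cancel₀ _ hT.ne']
  have hflight := relative_speed_mul_flight_time tn tn1 hkT hfree
  have hgap := wall_length_sub_eq tn tn1 hkT
  have hτ : 2 * A * τ' = (vn - k) * (tn1 - T) := by
    rw [hτ', mul_div_cancel₀ _ (by positivity)]
  linear_combination 𝒯 * (vn - k) * hgap - 2 * k * 𝒯 * hτ - k * 𝒯 * hflight

/-- Momentum-change formula in the adiabatic normal form `P₁` of the piecewise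
linear Fermi–Ulam accelerator: `Iₙ₊₁ = Iₙ + 2Ak𝒯(2τ̄ − 1)`. -/
theorem adiabatic_normal_form_momentum_change
    (A B T : ℝ) (hA : 0 < A) (hAB : A < B) (hT : 0 < T)
    (k 𝒯 : ℝ) (hk : k = (B - A) / T) (h𝒯 : 𝒯 = T / (A * B))
    (tn tn1 ln ln1 vn : ℝ)
    (htn0 : 0 < tn) (htnT : tn < T) (htn1T : T < tn1) (htn1 : tn1 < 2 * T)
    (hln : ln = B - k * tn) (hln1 : ln1 = A + k * (tn1 - T))
    (hfree : vn * (tn1 - tn) = ln + ln1)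
    (In In1 τ' : ℝ)
    (hIn : In = 𝒯 * ln * (vn - k)) (hIn1 : In1 = 𝒯 * ln1 * (vn - k))
    (hτ' : τ' = (vn - k) * (tn1 - T) / (2 * A)) :
    In1 = In + 2 * A * k * 𝒯 * (2 * τ' - 1) :=
  adiabatic_normal_form_momentum_change_general A B T hA hT k 𝒯 hk tn tn1 ln ln1 vn hln hln1 hfree
    In In1 τ' hIn hIn1 hτ'
end

section
/- Let A, B, T be reals with 0 < A < B and T > 0; set k = (B−A)/T and 𝒯 = T/(AB). Define maps P₁, P₂ : ℝ² → ℝ² by P₁(τ, I) = (fract(τ − I/2), I + 2Ak𝒯·(2·fract(τ − I/2) − 1)) and P₂(τ, I) = (fract(τ − I/2), I − 2Bk𝒯·(2·fract(τ − I/2) − 1)), where fract denotes the fractional part, and set P = P₂ ∘ P₁. Then for every D ∈ ℝ and every (τ, I) ∈ ℝ² with τ + A·I/(2(B−A)) ≡ D (mod 1), the image (τ', I') = P(τ, I) also satisfies τ' + A·I'/(2(B−A)) ≡ D (mod 1). In other words, each circle 𝒞_D = {(τ,I) : τ + A·I/(2(B−A)) ≡ D (mod 1)} is invariant under P. -/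
/-- Each circle `𝒞_D = {(τ,I) : τ + A·I/(2(B−A)) ≡ D (mod 1)}` is invariant
under the complete Poincaré map `P = P₂ ∘ P₁` of the piecewise linear
Fermi–Ulam accelerator. -/
theorem invariant_circles
    (A B T : ℝ) (hA : 0 < A) (hAB : A < B) (hT : 0 < T)
    (k 𝒯 : ℝ) (hk : k = (B - A) / T) (h𝒯 : 𝒯 = T / (A * B))
    (P₁ P₂ P : ℝ × ℝ → ℝ × ℝ)
    (hP₁ : ∀ τ I : ℝ, P₁ (τ, I) =
      (Int.fract (τ - I/2), I + 2*A*k*𝒯 * (2 * Int.fract (τ - I/2) - 1)))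
    (hP₂ : ∀ τ I : ℝ, P₂ (τ, I) =
      (Int.fract (τ - I/2), I - 2*B*k*𝒯 * (2 * Int.fract (τ - I/2) - 1)))
    (hP : P = P₂ ∘ P₁)
    (D τ I : ℝ)
    (hmem : ∃ z : ℤ, τ + A * I / (2 * (B - A)) = D + z) :
    ∃ z : ℤ, (P (τ, I)).1 + A * (P (τ, I)).2 / (2 * (B - A)) = D + z := by
  obtain ⟨z, hz⟩ := hmem
  subst hP hk h𝒯
  have hBA : B - A ≠ 0 := sub_ne_zero.mpr hAB.ne'
  have hA0 : A ≠ 0 := hA.ne'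
  have hB0 : B ≠ 0 := by linarith
  have hT0 : T ≠ 0 := hT.ne'
  simp only [Function.comp_apply, hP₁, hP₂]
  set τ₁ := Int.fract (τ - I/2) with hτ₁
  set I₁ := I + 2*A*((B - A)/T)*(T/(A*B)) * (2*τ₁ - 1) with hI₁
  refine ⟨z + ⌊τ₁ - I₁/2⌋ - ⌊τ - I/2⌋, ?_⟩
  have h1 : τ₁ = τ - I/2 - ⌊τ - I/2⌋ := rfl
  have h2 : Int.fract (τ₁ - I₁/2) = τ₁ - I₁/2 - ⌊τ₁ - I₁/2⌋ := rfl
  have hD : D = τ + A * I / (2 * (B - A)) - z := by linarith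
  rw [h2, hD, hI₁, h1]
  push_cast
  field_simp
  ring
end

section
/- Let q be a positive integer, A > 0, B = (q+1)·A, T > 0, k = (B−A)/T, 𝒯 = T/(AB) (so 2Ak𝒯 = 2q/(q+1) and 2Bk𝒯 = 2q). Define P₁, P₂ : ℝ² → ℝ² by P₁(τ, I) = (fract(τ − I/2), I + 2Ak𝒯·(2·fract(τ − I/2) − 1)) and P₂(τ, I) = (fract(τ − I/2), I − 2Bk𝒯·(2·fract(τ − I/2) − 1)), and P = P₂ ∘ P₁. Let m ∈ {0,…,q−1}, D ∈ (m/q, (m+1)/q), s ∈ {1,…,q}, n ∈ ℤ. Suppose τ ∈ (qD/(q+1) − (m+1−s)/(q+1), qD/(q+1) − (m−s)/(q+1)) and I = 2q·(D + n − τ). Then P(τ, I) = (τ'', I'') where τ'' = τ + q(1−2D)/(q+1) + 2(m+1−s)/(q+1), this value lies in (0,1), and τ'' + I''/(2q) = D + n. -/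
/-- Middle-components case of the skew-product structure of the complete
Poincaré map of the `q`-resonant piecewise linear Fermi–Ulam accelerator:
on the middle continuity components (`s = 1,…,q`) the base moves by the
interval-exchange formula and the floor number `n` is preserved. -/
theorem skew_product_middle_components
    (q : ℕ) (hq : 0 < q)
    (A B T : ℝ) (hA : 0 < A) (hB : B = (q + 1) * A) (hT : 0 < T)
    (k 𝒯 : ℝ) (hk : k = (B - A) / T) (h𝒯 : 𝒯 = T / (A * B))
    (P₁ P₂ P : ℝ × ℝ → ℝ × ℝ)
    (hP₁ : ∀ τ I : ℝ, P₁ (τ, I) =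
      (Int.fract (τ - I/2), I + 2*A*k*𝒯 * (2 * Int.fract (τ - I/2) - 1)))
    (hP₂ : ∀ τ I : ℝ, P₂ (τ, I) =
      (Int.fract (τ - I/2), I - 2*B*k*𝒯 * (2 * Int.fract (τ - I/2) - 1)))
    (hP : P = P₂ ∘ P₁)
    (m : ℕ) (hm : m < q)
    (D : ℝ) (hD₁ : (m : ℝ) / q < D) (hD₂ : D < ((m : ℝ) + 1) / q)
    (s : ℕ) (hs₁ : 1 ≤ s) (hs₂ : s ≤ q)
    (n : ℤ) (τ I : ℝ)
    (hτ₁ : (q : ℝ) * D / (q + 1) - ((m : ℝ) + 1 - s) / (q + 1) < τ)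
    (hτ₂ : τ < (q : ℝ) * D / (q + 1) - ((m : ℝ) - s) / (q + 1))
    (hI : I = 2 * q * (D + n - τ)) :
    (P (τ, I)).1 = τ + q * (1 - 2*D) / (q + 1) + 2 * ((m : ℝ) + 1 - s) / (q + 1)
    ∧ 0 < (P (τ, I)).1 ∧ (P (τ, I)).1 < 1
    ∧ (P (τ, I)).1 + (P (τ, I)).2 / (2 * q) = D + n := by
  have hq0 : (0:ℝ) < (q:ℝ) := by exact_mod_cast hq
  have hq1 : (0:ℝ) < (q:ℝ) + 1 := by linarith
  have hA' : A ≠ 0 := ne_of_gt hA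
  have hT' : T ≠ 0 := ne_of_gt hT
  have hq1' : ((q:ℝ) + 1) ≠ 0 := ne_of_gt hq1
  -- constants
  have c1 : 2*A*k*𝒯 = 2*(q:ℝ)/((q:ℝ)+1) := by
    subst hk h𝒯 hB; field_simp; ring
  have c2 : 2*B*k*𝒯 = 2*(q:ℝ) := by
    subst hk h𝒯 hB; field_simp; ring
  subst hI hP
  -- cleared-denominator inequalities
  have h1 : (q:ℝ)*D - ((m:ℝ)+1-s) < τ*((q:ℝ)+1) := by
    rw [div_sub_div_same] at hτ₁
    exact (div_lt_iff₀ hq1).1 hτ₁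
  have h2 : τ*((q:ℝ)+1) < (q:ℝ)*D - ((m:ℝ)-s) := by
    rw [div_sub_div_same] at hτ₂
    exact (lt_div_iff₀ hq1).1 hτ₂
  have hqD1 : (q:ℝ)*D < (m:ℝ)+1 := by
    have := (lt_div_iff₀ hq0).1 hD₂; linarith
  have hqD0 : (m:ℝ) < (q:ℝ)*D := by
    have := (div_lt_iff₀ hq0).1 hD₁; linarith
  have hsq : (s:ℝ) ≤ (q:ℝ) := by exact_mod_cast hs₂
  have hs1 : (1:ℝ) ≤ (s:ℝ) := by exact_mod_cast hs₁
  -- first fract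
  have ht1pos : 0 < ((q:ℝ)+1)*τ - (q:ℝ)*D + ((m:ℝ)+1-(s:ℝ)) := by nlinarith
  have ht1lt : ((q:ℝ)+1)*τ - (q:ℝ)*D + ((m:ℝ)+1-(s:ℝ)) < 1 := by nlinarith
  have e1 : τ - 2*(q:ℝ)*(D+(n:ℝ)-τ)/2
      = ((q:ℝ)+1)*τ - (q:ℝ)*D + ((m:ℝ)+1-(s:ℝ)) + (((s:ℤ) - m - 1 - q*n : ℤ) : ℝ) := by
    push_cast; ring
  have f1 : Int.fract (τ - 2*(q:ℝ)*(D+(n:ℝ)-τ)/2)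
      = ((q:ℝ)+1)*τ - (q:ℝ)*D + ((m:ℝ)+1-(s:ℝ)) := by
    rw [e1, Int.fract_add_intCast, Int.fract_eq_self.2 ⟨le_of_lt ht1pos, ht1lt⟩]
  -- second fract
  have hτ₂eq : τ + (q:ℝ)*(1-2*D)/((q:ℝ)+1) + 2*((m:ℝ)+1-(s:ℝ))/((q:ℝ)+1)
      = (τ*((q:ℝ)+1) + (q:ℝ)*(1-2*D) + 2*((m:ℝ)+1-(s:ℝ))) / ((q:ℝ)+1) := by
    field_simp
  have ht2pos : 0 < τ + (q:ℝ)*(1-2*D)/((q:ℝ)+1) + 2*((m:ℝ)+1-(s:ℝ))/((q:ℝ)+1) := by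
    rw [hτ₂eq]
    apply div_pos _ hq1; linarith
  have ht2lt : τ + (q:ℝ)*(1-2*D)/((q:ℝ)+1) + 2*((m:ℝ)+1-(s:ℝ))/((q:ℝ)+1) < 1 := by
    rw [hτ₂eq, div_lt_one hq1]; linarith
  have e2 : ((q:ℝ)+1)*τ - (q:ℝ)*D + ((m:ℝ)+1-(s:ℝ))
        - (2*(q:ℝ)*(D+(n:ℝ)-τ) + 2*(q:ℝ)/((q:ℝ)+1) * (2*(((q:ℝ)+1)*τ - (q:ℝ)*D + ((m:ℝ)+1-(s:ℝ))) - 1))/2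
      = τ + (q:ℝ)*(1-2*D)/((q:ℝ)+1) + 2*((m:ℝ)+1-(s:ℝ))/((q:ℝ)+1)
        + ((-(m:ℤ) - 1 + s - q*n : ℤ) : ℝ) := by
    push_cast; field_simp; ring
  have f2 : Int.fract (((q:ℝ)+1)*τ - (q:ℝ)*D + ((m:ℝ)+1-(s:ℝ))
        - (2*(q:ℝ)*(D+(n:ℝ)-τ) + 2*(q:ℝ)/((q:ℝ)+1) * (2*(((q:ℝ)+1)*τ - (q:ℝ)*D + ((m:ℝ)+1-(s:ℝ))) - 1))/2)
      = τ + (q:ℝ)*(1-2*D)/((q:ℝ)+1) + 2*((m:ℝ)+1-(s:ℝ))/((q:ℝ)+1) := by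
    rw [e2, Int.fract_add_intCast, Int.fract_eq_self.2 ⟨le_of_lt ht2pos, ht2lt⟩]
  rw [Function.comp_apply, hP₁, c1, f1, hP₂, c2, f2]
  refine ⟨rfl, ht2pos, ht2lt, ?_⟩
  field_simp
  ring
end

section
/- Let q be a positive integer, A > 0, B = (q+1)·A, T > 0, k = (B−A)/T, 𝒯 = T/(AB). Define P₁, P₂ : ℝ² → ℝ² by P₁(τ, I) = (fract(τ − I/2), I + 2Ak𝒯·(2·fract(τ − I/2) − 1)) and P₂(τ, I) = (fract(τ − I/2), I − 2Bk𝒯·(2·fract(τ − I/2) − 1)), and P = P₂ ∘ P₁. Let m ∈ {0,…,q−1}, D ∈ (m/q, (m+1/2)/q], n ∈ ℤ. Suppose τ ∈ (0, (qD − m)/(q+1)) and I = 2q·(D + n − τ). Then P(τ, I) = (τ'', I'') where τ'' = τ + q(1−2D)/(q+1) + 2(m+1)/(q+1) − 1, this value lies in (0,1), and τ'' + I''/(2q) = D + n + 1. -/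
set_option maxHeartbeats 2000000 in
/-- Starting-component case (`s = 0`, `D` in the first half of `(m/q,(m+1)/q)`)
of the skew-product structure of the complete Poincaré map of the `q`-resonant
piecewise linear Fermi–Ulam accelerator: the floor number `n` increases by 1. -/
theorem skew_product_starting_component
    (q : ℕ) (hq : 0 < q)
    (A B T : ℝ) (hA : 0 < A) (hB : B = (q + 1) * A) (hT : 0 < T)
    (k 𝒯 : ℝ) (hk : k = (B - A) / T) (h𝒯 : 𝒯 = T / (A * B))
    (P₁ P₂ P : ℝ × ℝ → ℝ × ℝ)
    (hP₁ : ∀ τ I : ℝ, P₁ (τ, I) =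
      (Int.fract (τ - I/2), I + 2*A*k*𝒯 * (2 * Int.fract (τ - I/2) - 1)))
    (hP₂ : ∀ τ I : ℝ, P₂ (τ, I) =
      (Int.fract (τ - I/2), I - 2*B*k*𝒯 * (2 * Int.fract (τ - I/2) - 1)))
    (hP : P = P₂ ∘ P₁)
    (m : ℕ) (hm : m < q)
    (D : ℝ) (hD₁ : (m : ℝ) / q < D) (hD₂ : D ≤ ((m : ℝ) + 1/2) / q)
    (n : ℤ) (τ I : ℝ)
    (hτ₁ : 0 < τ) (hτ₂ : τ < ((q : ℝ) * D - m) / (q + 1))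
    (hI : I = 2 * q * (D + n - τ)) :
    (P (τ, I)).1 = τ + q * (1 - 2*D) / (q + 1) + 2 * ((m : ℝ) + 1) / (q + 1) - 1
    ∧ 0 < (P (τ, I)).1 ∧ (P (τ, I)).1 < 1
    ∧ (P (τ, I)).1 + (P (τ, I)).2 / (2 * q) = D + n + 1 := by
  have hqR : (0:ℝ) < (q:ℝ) := by exact_mod_cast hq
  have hq1 : (0:ℝ) < (q:ℝ) + 1 := by linarith
  have hA' : A ≠ 0 := ne_of_gt hA
  have hT' : T ≠ 0 := ne_of_gt hT
  have hq1' : ((q:ℝ) + 1) ≠ 0 := ne_of_gt hq1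
  -- kick coefficients
  have hAk : 2*A*k*𝒯 = 2*(q:ℝ)/((q:ℝ)+1) := by
    subst hB hk h𝒯; field_simp; ring
  have hBk : 2*B*k*𝒯 = 2*(q:ℝ) := by
    subst hB hk h𝒯; field_simp; ring
  -- bounds on q*D and τ
  have hmq : (m:ℝ) < (q:ℝ)*D := by
    rw [div_lt_iff₀ hqR] at hD₁; linarith
  have hqD : (q:ℝ)*D ≤ (m:ℝ) + 1/2 := by
    rw [le_div_iff₀ hqR] at hD₂; linarith
  have hτ₂' : τ * ((q:ℝ)+1) < (q:ℝ)*D - m := by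
    rw [lt_div_iff₀ hq1] at hτ₂; linarith
  -- first fractional part
  set u : ℝ := ((q:ℝ)+1)*τ - (q:ℝ)*D + m + 1 with hu
  have hu0 : 0 ≤ u := by nlinarith
  have hu1 : u < 1 := by nlinarith
  have hf1 : Int.fract (τ - I/2) = u := by
    have h : τ - I/2 = (↑(-(m:ℤ) - 1 - q*n) : ℝ) + u := by
      rw [hI]; push_cast; ring
    rw [h, Int.fract_intCast_add, Int.fract_eq_self.mpr ⟨hu0, hu1⟩]
  -- the new τ
  set t : ℝ := τ + (q:ℝ) * (1 - 2*D) / ((q:ℝ) + 1) + 2 * ((m : ℝ) + 1) / ((q:ℝ) + 1) - 1 with ht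
  have htmul : t * ((q:ℝ)+1) = τ*((q:ℝ)+1) + (2*(m:ℝ) + 1 - 2*(q:ℝ)*D) := by
    rw [ht]; field_simp; ring
  have ht0 : 0 < t := by
    have h1 : 0 * ((q:ℝ)+1) < t * ((q:ℝ)+1) := by
      rw [htmul]; nlinarith [mul_pos hτ₁ hq1]
    exact lt_of_mul_lt_mul_right h1 hq1.le
  have ht1 : t < 1 := by
    have h1 : t * ((q:ℝ)+1) < 1 * ((q:ℝ)+1) := by
      rw [htmul]; nlinarith
    exact lt_of_mul_lt_mul_right h1 hq1.le
  -- the intermediate I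
  set I₁ : ℝ := I + 2*(q:ℝ)/((q:ℝ)+1) * (2*u - 1) with hI₁
  have hf2 : Int.fract (u - I₁/2) = t := by
    have h : u - I₁/2 = (↑(-(m:ℤ) - q*n) : ℝ) + t := by
      rw [hI₁, hu, ht, hI]; push_cast; field_simp; ring
    rw [h, Int.fract_intCast_add, Int.fract_eq_self.mpr ⟨le_of_lt ht0, ht1⟩]
  -- compute P
  have hPval : P (τ, I) = (t, I₁ - 2*(q:ℝ)*(2*t - 1)) := by
    rw [hP, Function.comp_apply, hP₁ τ I, hf1, hAk, ← hI₁, hP₂ u I₁, hf2, hBk]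
  rw [hPval]
  refine ⟨rfl, ht0, ht1, ?_⟩
  show t + (I₁ - 2*(q:ℝ)*(2*t - 1)) / (2*(q:ℝ)) = D + n + 1
  rw [hI₁, ht, hu, hI]
  field_simp
  ring
end

section
/- Let q be a positive integer, A > 0, B = (q+1)·A, T > 0, k = (B−A)/T, 𝒯 = T/(AB). Define P₁, P₂ : ℝ² → ℝ² by P₁(τ, I) = (fract(τ − I/2), I + 2Ak𝒯·(2·fract(τ − I/2) − 1)) and P₂(τ, I) = (fract(τ − I/2), I − 2Bk𝒯·(2·fract(τ − I/2) − 1)), and P = P₂ ∘ P₁. Let m ∈ {0,…,q−1}, D ∈ ((m+1/2)/q, (m+1)/q), n ∈ ℤ. Suppose τ ∈ ((qD + q − m)/(q+1), 1) and I = 2q·(D + n − τ). Then P(τ, I) = (τ'', I'') where τ'' = τ + q(1−2D)/(q+1) + 2(m−q)/(q+1) + 1, this value lies in (0,1), and τ'' + I''/(2q) = D + n − 1. -/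
/-- Ending-component case (`s = q+1`, `D` in the second half of `(m/q,(m+1)/q)`)
of the skew-product structure of the complete Poincaré map of the `q`-resonant
piecewise linear Fermi–Ulam accelerator: the floor number `n` decreases by 1. -/
theorem skew_product_ending_component
    (q : ℕ) (hq : 0 < q)
    (A B T : ℝ) (hA : 0 < A) (hB : B = (q + 1) * A) (hT : 0 < T)
    (k 𝒯 : ℝ) (hk : k = (B - A) / T) (h𝒯 : 𝒯 = T / (A * B))
    (P₁ P₂ P : ℝ × ℝ → ℝ × ℝ)
    (hP₁ : ∀ τ I : ℝ, P₁ (τ, I) =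
      (Int.fract (τ - I/2), I + 2*A*k*𝒯 * (2 * Int.fract (τ - I/2) - 1)))
    (hP₂ : ∀ τ I : ℝ, P₂ (τ, I) =
      (Int.fract (τ - I/2), I - 2*B*k*𝒯 * (2 * Int.fract (τ - I/2) - 1)))
    (hP : P = P₂ ∘ P₁)
    (m : ℕ) (hm : m < q)
    (D : ℝ) (hD₁ : ((m : ℝ) + 1/2) / q < D) (hD₂ : D < ((m : ℝ) + 1) / q)
    (n : ℤ) (τ I : ℝ)
    (hτ₁ : ((q : ℝ) * D + q - m) / (q + 1) < τ) (hτ₂ : τ < 1)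
    (hI : I = 2 * q * (D + n - τ)) :
    (P (τ, I)).1 = τ + q * (1 - 2*D) / (q + 1) + 2 * ((m : ℝ) - q) / (q + 1) + 1
    ∧ 0 < (P (τ, I)).1 ∧ (P (τ, I)).1 < 1
    ∧ (P (τ, I)).1 + (P (τ, I)).2 / (2 * q) = D + n - 1 := by
  have hq' : (0:ℝ) < q := by exact_mod_cast hq
  have hq1 : (0:ℝ) < (q:ℝ) + 1 := by linarith
  have hq1' : ((q:ℝ) + 1) ≠ 0 := ne_of_gt hq1
  have hq1'' : (1:ℝ) + (q:ℝ) ≠ 0 := by linarith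
  have hA0 : A ≠ 0 := ne_of_gt hA
  have hT0 : T ≠ 0 := ne_of_gt hT
  -- coefficients
  have hc1 : 2*A*k*𝒯 = 2*(q:ℝ)/((q:ℝ)+1) := by
    subst hB hk h𝒯; field_simp; ring
  have hc2 : 2*B*k*𝒯 = 2*(q:ℝ) := by
    subst hB hk h𝒯; field_simp; ring
  -- inequalities in product form
  have hD₁' : (m:ℝ) + 1/2 < q * D := by
    rw [div_lt_iff₀ hq'] at hD₁; linarith [hD₁]
  have hD₂' : (q:ℝ) * D < m + 1 := by
    rw [lt_div_iff₀ hq'] at hD₂; linarith [hD₂]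
  have hτ₁' : (q:ℝ) * D + q - m < ((q:ℝ)+1) * τ := by
    rw [div_lt_iff₀ hq1] at hτ₁; linarith [hτ₁]
  have hτ₂' : ((q:ℝ)+1) * τ < (q:ℝ) + 1 := by nlinarith
  -- first fractional part
  have hf1 : Int.fract (τ - I/2) = ((q:ℝ)+1)*τ - q*D - q + m := by
    have h1 : τ - I/2 = (((q:ℝ)+1)*τ - q*D - q + m) + (((q:ℤ) - m - q*n : ℤ) : ℝ) := by
      rw [hI]; push_cast; ring
    rw [h1, Int.fract_add_intCast, Int.fract_eq_self.mpr ⟨by linarith, by linarith⟩]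
  -- second fractional part
  set t2 : ℝ := τ + (2*(m:ℝ) + 1 - 2*q*D)/((q:ℝ)+1) with ht2def
  have ht2l : 0 < t2 := by
    have : t2 = (((q:ℝ)+1)*τ + (2*(m:ℝ) + 1 - 2*q*D))/((q:ℝ)+1) := by
      rw [ht2def]; field_simp [hq1']
    rw [this]
    apply div_pos _ hq1
    linarith
  have ht2u : t2 < 1 := by
    have hneg : (2*(m:ℝ) + 1 - 2*q*D)/((q:ℝ)+1) < 0 :=
      div_neg_of_neg_of_pos (by linarith) hq1
    rw [ht2def]; linarith
  have hf2 : Int.fract ((((q:ℝ)+1)*τ - q*D - q + m) -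
      (I + 2*(q:ℝ)/((q:ℝ)+1) * (2 * ((((q:ℝ)+1)*τ - q*D - q + m)) - 1))/2) = t2 := by
    have h2 : (((q:ℝ)+1)*τ - q*D - q + m) -
        (I + 2*(q:ℝ)/((q:ℝ)+1) * (2 * ((((q:ℝ)+1)*τ - q*D - q + m)) - 1))/2
        = t2 + (((q:ℤ) - m - 1 - q*n : ℤ) : ℝ) := by
      rw [hI, ht2def]; push_cast; field_simp [hq1']; ring
    rw [h2, Int.fract_add_intCast, Int.fract_eq_self.mpr ⟨le_of_lt ht2l, ht2u⟩]
  rw [hP]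
  simp only [Function.comp_apply, hP₁, hP₂, hc1, hc2, hf1, hf2]
  refine ⟨by rw [ht2def]; field_simp [hq1']; ring, ht2l, ht2u, ?_⟩
  rw [hI, ht2def]
  field_simp [hq1']
  ring
end

section
/- Let q be a positive integer, A > 0, B = (q+1)·A, T > 0, k = (B−A)/T, 𝒯 = T/(AB). Define P₁, P₂ : ℝ² → ℝ² by P₁(τ, I) = (fract(τ − I/2), I + 2Ak𝒯·(2·fract(τ − I/2) − 1)) and P₂(τ, I) = (fract(τ − I/2), I − 2Bk𝒯·(2·fract(τ − I/2) − 1)), and P = P₂ ∘ P₁. Let m ∈ {0,…,q−1}, s ∈ {1,…,q+1}, n ∈ ℤ. Suppose τ ∈ ((s−1)/(q+1), s/(q+1)) and I = 2q·(m/q + n − τ). Then P(τ, I) = (τ'', I'') where τ'' = τ + 1 + (1−2s)/(q+1), this value lies in (0,1), and τ'' + I''/(2q) = m/q + n. -/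
/-- Atypical case `D = m/q` of the skew-product structure of the complete
Poincaré map of the `q`-resonant piecewise linear Fermi–Ulam accelerator:
the base map is a rigid shift on each of the `q+1` uniform components and the
floor number `n` is always preserved. -/
theorem skew_product_atypical_circle
    (q : ℕ) (hq : 0 < q)
    (A B T : ℝ) (hA : 0 < A) (hB : B = (q + 1) * A) (hT : 0 < T)
    (k 𝒯 : ℝ) (hk : k = (B - A) / T) (h𝒯 : 𝒯 = T / (A * B))
    (P₁ P₂ P : ℝ × ℝ → ℝ × ℝ)
    (hP₁ : ∀ τ I : ℝ, P₁ (τ, I) =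
      (Int.fract (τ - I/2), I + 2*A*k*𝒯 * (2 * Int.fract (τ - I/2) - 1)))
    (hP₂ : ∀ τ I : ℝ, P₂ (τ, I) =
      (Int.fract (τ - I/2), I - 2*B*k*𝒯 * (2 * Int.fract (τ - I/2) - 1)))
    (hP : P = P₂ ∘ P₁)
    (m : ℕ) (hm : m < q)
    (s : ℕ) (hs₁ : 1 ≤ s) (hs₂ : s ≤ q + 1)
    (n : ℤ) (τ I : ℝ)
    (hτ₁ : ((s : ℝ) - 1) / (q + 1) < τ) (hτ₂ : τ < (s : ℝ) / (q + 1))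
    (hI : I = 2 * q * ((m : ℝ) / q + n - τ)) :
    (P (τ, I)).1 = τ + 1 + (1 - 2 * (s : ℝ)) / (q + 1)
    ∧ 0 < (P (τ, I)).1 ∧ (P (τ, I)).1 < 1
    ∧ (P (τ, I)).1 + (P (τ, I)).2 / (2 * q) = (m : ℝ) / q + n := by
  have hq0 : (q:ℝ) ≠ 0 := Nat.cast_ne_zero.2 hq.ne'
  have hq1 : (0:ℝ) < (q:ℝ) + 1 := by positivity
  have hq1' : ((q:ℝ) + 1) ≠ 0 := hq1.ne'
  have hs1 : (1:ℝ) ≤ (s:ℝ) := by exact_mod_cast hs₁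
  have hsq : (s:ℝ) ≤ (q:ℝ) + 1 := by exact_mod_cast hs₂
  have hA' : A ≠ 0 := hA.ne'
  have hT' : T ≠ 0 := hT.ne'
  have hl : (s:ℝ) - 1 < ((q:ℝ) + 1) * τ := by
    have := (div_lt_iff₀ hq1).mp hτ₁; linarith
  have hr : ((q:ℝ) + 1) * τ < (s:ℝ) := by
    have := (lt_div_iff₀ hq1).mp hτ₂; linarith
  set f₁ : ℝ := ((q:ℝ)+1)*τ - s + 1 with hf₁
  have hf0 : 0 ≤ f₁ := by rw [hf₁]; linarith
  have hf1 : f₁ < 1 := by rw [hf₁]; linarith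
  have hkA : 2*A*k*𝒯 = 2*(q:ℝ)/((q:ℝ)+1) := by
    subst hB hk h𝒯; field_simp; ring
  have hkB : 2*B*k*𝒯 = 2*(q:ℝ) := by
    subst hB hk h𝒯; field_simp; ring
  set τ'' : ℝ := τ + 1 + (1 - 2*(s:ℝ))/((q:ℝ)+1) with hτ''
  have he : ((q:ℝ)+1) * τ'' = ((q:ℝ)+1)*τ + ((q:ℝ)+2) - 2*s := by
    rw [hτ'']; field_simp; ring
  have ht0 : 0 < τ'' := by nlinarith
  have ht1 : τ'' < 1 := by nlinarith
  have hfr1 : Int.fract (τ - I/2) = f₁ := by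
    have e : τ - I/2 = ((s:ℤ) - 1 - m - q*n : ℤ) + f₁ := by
      rw [hI, hf₁]; push_cast; field_simp; ring
    rw [e, Int.fract_intCast_add, Int.fract_eq_self.2 ⟨hf0, hf1⟩]
  have hfr2 : Int.fract (f₁ - (I + 2*A*k*𝒯 * (2*f₁ - 1))/2) = τ'' := by
    have e : f₁ - (I + 2*A*k*𝒯 * (2*f₁ - 1))/2
        = ((s:ℤ) - 1 - m - q*n : ℤ) + τ'' := by
      rw [hkA, hI, hf₁, hτ'']; push_cast; field_simp; ring
    rw [e, Int.fract_intCast_add, Int.fract_eq_self.2 ⟨ht0.le, ht1⟩]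
  rw [hP]
  simp only [Function.comp_apply, hP₁, hP₂, hfr1, hfr2]
  refine ⟨trivial, ht0, ht1, ?_⟩
  rw [hkA, hkB, hI, hτ'', hf₁]
  field_simp
  ring
end

section
/- Let A > 0, B = 2A, T > 0, k = (B−A)/T, 𝒯 = T/(AB) (so 2Ak𝒯 = 1 and 2Bk𝒯 = 2). Define P₁, P₂ : ℝ² → ℝ² by P₁(τ, I) = (fract(τ − I/2), I + 2Ak𝒯·(2·fract(τ − I/2) − 1)) and P₂(τ, I) = (fract(τ − I/2), I − 2Bk𝒯·(2·fract(τ − I/2) − 1)), and P = P₂ ∘ P₁. Suppose τ ∈ (0, 1/4) and τ + I/2 − 1/2 ∈ ℤ. Then P(τ, I) = (τ, I + 2); consequently P^N(τ, I) = (τ, I + 2N) for all N ∈ ℕ, so that the momentum I_N = I + 2N tends linearly to infinity. -/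
open Filter

/-- Linearly escaping orbits in the special 1-resonance (`B = 2A`) case of the
classical piecewise linear Fermi–Ulam accelerator (including Ulam's original
parameters): points with `τ ∈ (0, 1/4)` and `τ + I/2 − 1/2 ∈ ℤ` are fixed in
the base coordinate and gain momentum 2 per period, so the momentum tends
linearly to infinity. -/
theorem linearly_escaping_orbits
    (A B T : ℝ) (hA : 0 < A) (hB : B = 2 * A) (hT : 0 < T)
    (k 𝒯 : ℝ) (hk : k = (B - A) / T) (h𝒯 : 𝒯 = T / (A * B))
    (P₁ P₂ P : ℝ × ℝ → ℝ × ℝ)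
    (hP₁ : ∀ τ I : ℝ, P₁ (τ, I) =
      (Int.fract (τ - I/2), I + 2*A*k*𝒯 * (2 * Int.fract (τ - I/2) - 1)))
    (hP₂ : ∀ τ I : ℝ, P₂ (τ, I) =
      (Int.fract (τ - I/2), I - 2*B*k*𝒯 * (2 * Int.fract (τ - I/2) - 1)))
    (hP : P = P₂ ∘ P₁)
    (τ I : ℝ) (hτ₁ : 0 < τ) (hτ₂ : τ < 1/4)
    (hcirc : ∃ z : ℤ, τ + I/2 - 1/2 = z) :
    P (τ, I) = (τ, I + 2)
    ∧ (∀ N : ℕ, P^[N] (τ, I) = (τ, I + 2 * N))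
    ∧ Tendsto (fun N : ℕ => (P^[N] (τ, I)).2) atTop atTop := by
  have hAk : 2*A*k*𝒯 = 1 := by
    rw [hk, h𝒯, hB]; field_simp; ring
  have hBk : 2*B*k*𝒯 = 2 := by
    rw [hk, h𝒯, hB]; field_simp; ring
  have hstep : ∀ J : ℝ, (∃ z : ℤ, τ + J/2 - 1/2 = z) → P (τ, J) = (τ, J + 2) := by
    rintro J ⟨z, hz⟩
    have hJ : J = 2*z + 1 - 2*τ := by linarith
    have hf1 : Int.fract (τ - J/2) = 2*τ + 1/2 := by
      have h1 : τ - J/2 = (2*τ + 1/2) + (-z - 1 : ℤ) := by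
        push_cast; rw [hJ]; ring
      rw [h1, Int.fract_add_intCast, Int.fract_eq_self.2 ⟨by linarith, by linarith⟩]
    have hf2 : Int.fract ((2*τ + 1/2) - (J + 1 * (2 * (2*τ + 1/2) - 1))/2) = τ := by
      have h2 : (2*τ + 1/2) - (J + 1 * (2 * (2*τ + 1/2) - 1))/2 = τ + (-z : ℤ) := by
        push_cast; rw [hJ]; ring
      rw [h2, Int.fract_add_intCast, Int.fract_eq_self.2 ⟨le_of_lt hτ₁, by linarith⟩]
    rw [hP]
    simp only [Function.comp_apply, hP₁, hf1, hAk]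
    rw [hP₂, hf2, hBk]
    rw [Prod.mk.injEq]
    exact ⟨rfl, by ring⟩
  have h0 : P (τ, I) = (τ, I + 2) := hstep I hcirc
  have hiter : ∀ N : ℕ, P^[N] (τ, I) = (τ, I + 2 * N) := by
    intro N
    induction N with
    | zero => simp
    | succ n ih =>
      rw [Function.iterate_succ_apply', ih]
      obtain ⟨z, hz⟩ := hcirc
      have : P (τ, I + 2 * n) = (τ, I + 2 * n + 2) := by
        apply hstep
        exact ⟨z + n, by push_cast; linarith⟩
      rw [this]; push_cast; ring_nf
  refine ⟨h0, hiter, ?_⟩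
  have : (fun N : ℕ => (P^[N] (τ, I)).2) = fun N : ℕ => I + 2 * N := by
    funext N; rw [hiter N]
  rw [this]
  apply tendsto_atTop_add_const_left
  exact Tendsto.const_mul_atTop (by norm_num) (tendsto_natCast_atTop_atTop)
end

section
/- Let p, q be coprime positive integers and define γ_n = (1/q)·Σ_{m=0}^{q−1} exp(−2πi·m²·p/q)·cos(2πnm/q) for n ∈ ℤ. Let (A_n)_{n≥1} be a finitely supported sequence of complex numbers and define φ : ℝ → ℂ by φ(x) = Σ_{n≥1} A_n·sin(nπx). Then for every x ∈ ℝ: Σ_{n≥1} exp(−2πi·n²·p/q)·A_n·sin(nπx) = Σ_{n=0}^{q−1} γ_n·φ(x + 2n/q). -/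
/-!
Since `p` and `q` are integers, the phase `f a = exp (-2πi a² p / q)` is an even, `q`-periodic
function of `a ∈ ℤ`. The coefficients `γ` are its discrete cosine transform, so discrete Fourier
inversion (orthogonality of the `q`-th roots of unity) gives `∑_{m<q} γ m · e^{2πi t m / q} = f t`
for every `t ∈ ℤ`. Translating `x` by `2m/q` multiplies the two exponentials making up
`sin (nπx)` by `e^{±2πi n m / q}`, so by evenness of `f` the translates recombine to
`∑_{m<q} γ m · sin (nπ (x + 2m/q)) = f n · sin (nπx)`; summing against `A n` gives the identity.
-/

open Complex Finset

namespace IsPrimitiveRoot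

variable {K : Type*} [Field K] {ζ : K} {q : ℕ}

theorem sum_range_zpow_mul (hζ : IsPrimitiveRoot ζ q) (r : ℤ) :
    ∑ m ∈ range q, ζ ^ (r * m) = if (q : ℤ) ∣ r then (q : K) else 0 := by
  simp_rw [zpow_mul, zpow_natCast]
  split_ifs with hr
  · simp [(hζ.zpow_eq_one_iff_dvd r).2 hr]
  · have hq : (ζ ^ r) ^ q = 1 := by
      rw [← zpow_natCast, ← zpow_mul, mul_comm, zpow_mul, hζ.zpow_eq_one, one_zpow]
    rw [geom_sum_eq (mt (hζ.zpow_eq_one_iff_dvd r).1 hr), hq, sub_self, zero_div]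

theorem sum_range_mul_sum_range_zpow {g : ℤ → K} (hζ : IsPrimitiveRoot ζ q)
    (hg : Function.Periodic g q) (t : ℤ) :
    ∑ k ∈ range q, g k * ∑ m ∈ range q, ζ ^ ((k - t) * m) = q * g t := by
  rcases Nat.eq_zero_or_pos q with rfl | hq
  · simp
  have hq' : (0 : ℤ) < q := by exact_mod_cast hq
  obtain ⟨k₀, hk₀⟩ : ∃ k₀ : ℕ, (k₀ : ℤ) = t % q :=
    ⟨_, Int.toNat_of_nonneg (Int.emod_nonneg t hq'.ne')⟩
  have hk₀q : k₀ < q := by have := Int.emod_lt_of_pos t hq'; omega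
  have hdvd {k : ℕ} (hk : k < q) : (q : ℤ) ∣ k - t ↔ k = k₀ := by
    rw [← Int.modEq_iff_dvd, Int.ModEq, ← hk₀, Int.emod_eq_of_lt (by omega) (by omega)]
    omega
  have hgk₀ : g k₀ = g t := by
    rw [hk₀, Int.emod_def, mul_comm]
    exact hg.sub_int_mul_eq _
  calc ∑ k ∈ range q, g k * ∑ m ∈ range q, ζ ^ ((k - t) * m)
      = ∑ k ∈ range q, if k = k₀ then g k * q else 0 := by
        refine sum_congr rfl fun k hk => ?_
        rw [hζ.sum_range_zpow_mul, if_congr (hdvd (mem_range.1 hk)) rfl rfl, mul_ite, mul_zero]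
    _ = q * g t := by rw [sum_ite_eq', if_pos (mem_range.2 hk₀q), hgk₀, mul_comm]

end IsPrimitiveRoot

namespace Complex

open Real

theorem exp_two_pi_mul_I_mul_div (q : ℕ) (k : ℤ) :
    exp (2 * π * I * k / q) = exp (2 * π * I / q) ^ k := by
  rw [← exp_int_mul]; ring_nf

theorem periodic_exp_neg_two_pi_mul_I_mul_sq_div {q : ℕ} (hq : q ≠ 0) (p : ℤ) :
    Function.Periodic (fun a : ℤ => exp (-2 * π * I * a ^ 2 * p / q)) q := by
  intro a
  have hshift : -2 * π * I * ((a + q : ℤ) : ℂ) ^ 2 * p / q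
      = -2 * π * I * a ^ 2 * p / q + (-(p * (2 * a + q)) : ℤ) * (2 * π * I) := by
    push_cast; field_simp; ring
  simp only [hshift, exp_add, exp_int_mul_two_pi_mul_I, mul_one]

theorem even_exp_neg_two_pi_mul_I_mul_sq_div (q : ℕ) (p : ℤ) :
    Function.Even (fun a : ℤ => exp (-2 * π * I * a ^ 2 * p / q)) := by
  intro a; simp

theorem sum_range_mul_exp_of_cos_coeff {q : ℕ} (hq : q ≠ 0) {g : ℤ → ℂ}
    (hg : Function.Periodic g q) (hg_even : Function.Even g) {γ : ℤ → ℂ}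
    (hγ : ∀ n : ℤ, γ n = 1 / q * ∑ k ∈ range q, g k * (Real.cos (2 * π * n * k / q) : ℂ))
    (t : ℤ) :
    ∑ m ∈ range q, γ m * exp (2 * π * I * t * m / q) = g t := by
  have hζ := isPrimitiveRoot_exp q hq
  have hcos (k m : ℕ) : (Real.cos (2 * π * (m : ℤ) * k / q) : ℂ) * exp (2 * π * I * t * m / q)
      = (exp (2 * π * I / q) ^ ((k - -t) * m) + (exp (2 * π * I / q))⁻¹ ^ ((k - t) * m)) / 2 := by
    rw [inv_zpow', ← exp_two_pi_mul_I_mul_div, ← exp_two_pi_mul_I_mul_div, ofReal_cos, cos,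
      div_mul_eq_mul_div, add_mul, ← exp_add, ← exp_add, add_div]
    push_cast; ring_nf
  calc ∑ m ∈ range q, γ m * exp (2 * π * I * t * m / q)
      = ∑ k ∈ range q, ∑ m ∈ range q, 1 / (2 * q) *
          (g k * exp (2 * π * I / q) ^ ((k - -t) * m)
            + g k * (exp (2 * π * I / q))⁻¹ ^ ((k - t) * m)) := by
        simp_rw [hγ, mul_sum, sum_mul]
        rw [sum_comm]
        refine sum_congr rfl fun k _ => sum_congr rfl fun m _ => ?_
        rw [mul_assoc, mul_assoc, hcos]
        field_simp
    _ = 1 / (2 * q) * (∑ k ∈ range q, g k * ∑ m ∈ range q, exp (2 * π * I / q) ^ ((k - -t) * m)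
          + ∑ k ∈ range q, g k * ∑ m ∈ range q, (exp (2 * π * I / q))⁻¹ ^ ((k - t) * m)) := by
        simp only [mul_add, sum_add_distrib, mul_sum]
    _ = g t := by
        rw [hζ.sum_range_mul_sum_range_zpow hg, hζ.inv.sum_range_mul_sum_range_zpow hg, hg_even]
        field_simp; ring

theorem sum_range_mul_sin_add_two_pi_mul_div {q : ℕ} {c : ℕ → ℂ} {F : ℤ → ℂ}
    (hF : Function.Even F) (hc : ∀ t : ℤ, ∑ m ∈ range q, c m * exp (2 * π * I * t * m / q) = F t)
    (n : ℤ) (θ : ℂ) :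
    ∑ m ∈ range q, c m * sin (θ + 2 * π * n * m / q) = F n * sin θ := by
  have hsin (m : ℕ) : c m * sin (θ + 2 * π * n * m / q)
      = exp (-θ * I) * I / 2 * (c m * exp (2 * π * I * (-n : ℤ) * m / q))
        - exp (θ * I) * I / 2 * (c m * exp (2 * π * I * n * m / q)) := by
    have hneg : exp (-(θ + 2 * π * n * m / q) * I)
        = exp (-θ * I) * exp (2 * π * I * (-n : ℤ) * m / q) := by
      rw [← exp_add]; push_cast; ring_nf
    have hpos : exp ((θ + 2 * π * n * m / q) * I) = exp (θ * I) * exp (2 * π * I * n * m / q) := by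
      rw [← exp_add]; ring_nf
    rw [sin, hneg, hpos]; ring
  rw [sum_congr rfl fun m _ => hsin m, sum_sub_distrib, ← mul_sum, ← mul_sum, hc, hc, hF, sin]
  ring

end Complex

theorem resonant_floquet_identity_general
    (p q : ℕ) (hq : 0 < q)
    (γ : ℤ → ℂ)
    (hγ : ∀ n : ℤ, γ n = (1 / (q : ℂ)) * ∑ m ∈ Finset.range q,
      Complex.exp (-2 * (Real.pi : ℂ) * Complex.I * (m : ℂ)^2 * (p : ℂ) / (q : ℂ))
        * ((Real.cos (2 * Real.pi * (n : ℝ) * (m : ℝ) / (q : ℝ)) : ℝ) : ℂ))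
    (A : ℕ → ℂ) (hA : (Function.support A).Finite)
    (φ : ℝ → ℂ)
    (hφ : ∀ x : ℝ, φ x = ∑ᶠ n : ℕ, A n * Complex.sin ((n : ℂ) * (Real.pi : ℂ) * (x : ℂ)))
    (x : ℝ) :
    ∑ᶠ n : ℕ, Complex.exp (-2 * (Real.pi : ℂ) * Complex.I * (n : ℂ)^2 * (p : ℂ) / (q : ℂ))
        * A n * Complex.sin ((n : ℂ) * (Real.pi : ℂ) * (x : ℂ))
      = ∑ n ∈ Finset.range q, γ (n : ℤ) * φ (x + 2 * n / q) := by
  have hcoeff := sum_range_mul_exp_of_cos_coeff hq.ne'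
    (periodic_exp_neg_two_pi_mul_I_mul_sq_div hq.ne' p) (even_exp_neg_two_pi_mul_I_mul_sq_div q p)
    (γ := γ) (by simpa using hγ)
  have hfin (y : ℝ) : (Function.support fun n : ℕ => A n * sin (n * Real.pi * y)).Finite :=
    hA.subset (Function.support_mul_subset_left _ _)
  simp_rw [hφ, mul_finsum' _ _ (hfin _)]
  rw [← finsum_sum_comm _ _ fun m _ => (hfin _).subset (Function.support_mul_subset_right _ _)]
  refine finsum_congr fun n => ?_
  symm
  calc ∑ m ∈ range q, γ m * (A n * sin (n * Real.pi * (x + 2 * m / q : ℝ)))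
      = A n * ∑ m ∈ range q, γ m * sin (n * Real.pi * x + 2 * Real.pi * (n : ℤ) * m / q) := by
        rw [mul_sum]; refine sum_congr rfl fun m _ => ?_; push_cast; ring_nf
    _ = _ := by
        rw [sum_range_mul_sin_add_two_pi_mul_div (even_exp_neg_two_pi_mul_I_mul_sq_div q p) hcoeff]
        push_cast; ring

/-- Core identity of the simplified first-half Floquet operator of the
`(p,q)`-resonant quantum piecewise linear Fermi–Ulam accelerator: the resonant
phases `exp(−2πin²p/q)` act on a sine series as a finite linear combination,
with coefficients `γ_n`, of the translates `φ(x + 2n/q)` of the odd 2-periodic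
extension `φ` of the wave. -/
theorem resonant_floquet_identity
    (p q : ℕ) (hp : 0 < p) (hq : 0 < q) (hpq : Nat.Coprime p q)
    (γ : ℤ → ℂ)
    (hγ : ∀ n : ℤ, γ n = (1 / (q : ℂ)) * ∑ m ∈ Finset.range q,
      Complex.exp (-2 * (Real.pi : ℂ) * Complex.I * (m : ℂ)^2 * (p : ℂ) / (q : ℂ))
        * ((Real.cos (2 * Real.pi * (n : ℝ) * (m : ℝ) / (q : ℝ)) : ℝ) : ℂ))
    (A : ℕ → ℂ) (hA : (Function.support A).Finite) (hA₀ : A 0 = 0)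
    (φ : ℝ → ℂ)
    (hφ : ∀ x : ℝ, φ x = ∑ᶠ n : ℕ, A n * Complex.sin ((n : ℂ) * (Real.pi : ℂ) * (x : ℂ)))
    (x : ℝ) :
    ∑ᶠ n : ℕ, Complex.exp (-2 * (Real.pi : ℂ) * Complex.I * (n : ℂ)^2 * (p : ℂ) / (q : ℂ))
        * A n * Complex.sin ((n : ℂ) * (Real.pi : ℂ) * (x : ℂ))
      = ∑ n ∈ Finset.range q, γ (n : ℤ) * φ (x + 2 * n / q) :=
  resonant_floquet_identity_general p q hq γ hγ A hA φ hφ x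
end

section
/- Let p, q be coprime positive integers and define γ_n = (1/q)·Σ_{m=0}^{q−1} exp(−2πi·m²·p/q)·cos(2πnm/q) for n ∈ ℤ (so γ is q-periodic). Then the q×q complex circulant matrix Γ with entries Γ_{m,n} = γ_{n−m} (indices taken in ZMod q) is unitary, i.e. Γ·Γ* = 1. -/
/-!
Because the phases `exp(-2πi m²p/q)` depend only on `m mod q` and are even in `m`, the cosine in
`γ` can be replaced by `exp(2πi nm/q)`: `γ` is the inverse discrete Fourier transform on `ZMod q`
of a unimodular sequence `c`. Hence `Γ = q⁻¹ F* diag(c) F` for the Fourier matrix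
`F = (exp(2πi xy/q))`, and the orthogonality of characters, `F F* = F* F = q`, gives `Γ Γ* = 1`.
-/

open Matrix Finset

namespace AddChar

lemma apply_mem_unitary {G : Type*} [AddCommGroup G] [Finite G] (ψ : AddChar G ℂ) (x : G) :
    ψ x ∈ unitary ℂ := by
  rw [Unitary.mem_iff_self_mul_star, ← starRingEnd_apply, ← map_neg_eq_conj, ← map_add_eq_mul,
    add_neg_cancel, map_zero_eq_one]

variable {R : Type*} [CommRing R] {ψ : AddChar R ℂ}

def fourierMatrix (ψ : AddChar R ℂ) : Matrix R R ℂ := of fun x y => ψ (x * y)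

@[simp]
lemma fourierMatrix_apply (x y : R) : ψ.fourierMatrix x y = ψ (x * y) := rfl

lemma transpose_fourierMatrix : ψ.fourierMatrixᵀ = ψ.fourierMatrix := by
  ext x y
  rw [transpose_apply, fourierMatrix_apply, fourierMatrix_apply, mul_comm]

variable [Fintype R] [DecidableEq R]

lemma sum_apply_mul_star_apply (hψ : ψ.IsPrimitive) (x y : R) :
    ∑ z, ψ (x * z) * star (ψ (y * z)) = if x = y then (Fintype.card R : ℂ) else 0 := by
  have h (z : R) : ψ (x * z) * star (ψ (y * z)) = ψ (z * (x - y)) := by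
    rw [← starRingEnd_apply, ← map_neg_eq_conj, ← map_add_eq_mul]
    ring_nf
  simp only [h, sum_mulShift _ hψ, sub_eq_zero, Nat.cast_ite, Nat.cast_zero]

lemma fourierMatrix_mul_conjTranspose (hψ : ψ.IsPrimitive) :
    ψ.fourierMatrix * ψ.fourierMatrixᴴ = (Fintype.card R : ℂ) • 1 := by
  ext x y
  simp only [Matrix.mul_apply, conjTranspose_apply, fourierMatrix_apply,
    sum_apply_mul_star_apply hψ, Matrix.smul_apply, Matrix.one_apply, smul_eq_mul, mul_ite,
    mul_one, mul_zero]

lemma conjTranspose_fourierMatrix_mul (hψ : ψ.IsPrimitive) :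
    ψ.fourierMatrixᴴ * ψ.fourierMatrix = (Fintype.card R : ℂ) • 1 := by
  calc ψ.fourierMatrixᴴ * ψ.fourierMatrix = (ψ.fourierMatrix * ψ.fourierMatrixᴴ)ᵀ := by
        rw [transpose_mul, ← conjTranspose_transpose_eq_transpose_conjTranspose,
          transpose_fourierMatrix]
    _ = (Fintype.card R : ℂ) • 1 := by
        rw [fourierMatrix_mul_conjTranspose hψ, transpose_smul, transpose_one]

noncomputable def fourierMultiplierMatrix (ψ : AddChar R ℂ) (c : R → ℂ) : Matrix R R ℂ :=
  (Fintype.card R : ℂ)⁻¹ • (ψ.fourierMatrixᴴ * diagonal c * ψ.fourierMatrix)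

lemma fourierMultiplierMatrix_apply (c : R → ℂ) (x y : R) :
    ψ.fourierMultiplierMatrix c x y =
      (Fintype.card R : ℂ)⁻¹ * ∑ z, c z * ψ ((y - x) * z) := by
  rw [fourierMultiplierMatrix, Matrix.smul_apply, smul_eq_mul, Matrix.mul_apply]
  simp only [mul_diagonal, conjTranspose_apply, fourierMatrix_apply]
  congr 1
  refine sum_congr rfl fun z _ => ?_
  rw [← starRingEnd_apply, ← map_neg_eq_conj, mul_right_comm, ← map_add_eq_mul]
  ring_nf

lemma fourierMultiplierMatrix_mem_unitaryGroup (hψ : ψ.IsPrimitive) {c : R → ℂ}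
    (hc : ∀ z, c z ∈ unitary ℂ) : ψ.fourierMultiplierMatrix c ∈ unitaryGroup R ℂ := by
  set F := ψ.fourierMatrix
  set N := (Fintype.card R : ℂ)
  have hN : N ≠ 0 := Nat.cast_ne_zero.mpr Fintype.card_ne_zero
  have hD : diagonal c * diagonal (star c) = 1 := by
    rw [diagonal_mul_diagonal, ← diagonal_one]
    exact congrArg diagonal (funext fun z => Unitary.mul_star_self_of_mem (hc z))
  rw [mem_unitaryGroup_iff, fourierMultiplierMatrix, star_eq_conjTranspose, conjTranspose_smul,
    conjTranspose_mul, conjTranspose_mul, diagonal_conjTranspose, conjTranspose_conjTranspose,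
    star_inv₀, star_natCast]
  calc N⁻¹ • (Fᴴ * diagonal c * F) * (N⁻¹ • (Fᴴ * (diagonal (star c) * F)))
      = (N⁻¹ * N⁻¹) • (Fᴴ * (diagonal c * ((F * Fᴴ) * (diagonal (star c) * F)))) := by
        simp only [Matrix.smul_mul, Matrix.mul_smul, smul_smul, Matrix.mul_assoc]
    _ = (N⁻¹ * N⁻¹ * N) • (Fᴴ * F) := by
        rw [fourierMatrix_mul_conjTranspose hψ, Matrix.smul_mul, Matrix.one_mul, Matrix.mul_smul,
          Matrix.mul_smul, ← Matrix.mul_assoc (diagonal c), hD, Matrix.one_mul, smul_smul]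
    _ = 1 := by
        rw [conjTranspose_fourierMatrix_mul hψ, smul_smul, inv_mul_cancel_right₀ hN,
          inv_mul_cancel₀ hN, one_smul]

end AddChar

namespace ZMod

variable {q : ℕ} [NeZero q]

lemma finEquiv_apply (i : Fin q) : finEquiv q i = ((i : ℕ) : ZMod q) := by
  obtain ⟨n, rfl⟩ := Nat.exists_eq_succ_of_ne_zero (NeZero.ne q)
  exact (Fin.cast_val_eq_self i).symm

lemma sum_range_natCast {M : Type*} [AddCommMonoid M] (f : ZMod q → M) :
    ∑ m ∈ range q, f m = ∑ z, f z := by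
  rw [← Fin.sum_univ_eq_sum_range (fun m => f m), ← (finEquiv q).toEquiv.sum_comp]
  exact sum_congr rfl fun i _ => congrArg f (finEquiv_apply i).symm

lemma ofReal_cos_eq_stdAddChar (k : ℤ) :
    ((Real.cos (2 * Real.pi * k / q) : ℝ) : ℂ) =
      (stdAddChar (k : ZMod q) + stdAddChar (-(k : ZMod q))) / 2 := by
  rw [← Int.cast_neg, stdAddChar_coe, stdAddChar_coe, Complex.ofReal_cos, Complex.cos]
  push_cast
  ring_nf

lemma sum_range_exp_mul_cos_eq_sum_stdAddChar (p : ℕ) (n : ℤ) :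
    ∑ m ∈ range q,
        Complex.exp (-2 * (Real.pi : ℂ) * Complex.I * (m : ℂ)^2 * (p : ℂ) / (q : ℂ))
          * ((Real.cos (2 * Real.pi * (n : ℝ) * (m : ℝ) / (q : ℝ)) : ℝ) : ℂ) =
      ∑ z : ZMod q, stdAddChar (-((p : ZMod q) * z ^ 2)) * stdAddChar ((n : ZMod q) * z) := by
  set c : ZMod q → ℂ := fun z => stdAddChar (-((p : ZMod q) * z ^ 2))
  have hterm (m : ℕ) :
      Complex.exp (-2 * (Real.pi : ℂ) * Complex.I * (m : ℂ)^2 * (p : ℂ) / (q : ℂ))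
        * ((Real.cos (2 * Real.pi * (n : ℝ) * (m : ℝ) / (q : ℝ)) : ℝ) : ℂ) =
      (c m * stdAddChar ((n : ZMod q) * (m : ZMod q)) +
        c m * stdAddChar (-((n : ZMod q) * (m : ZMod q)))) / 2 := by
    have hc := stdAddChar_coe (N := q) (-(p * m ^ 2 : ℤ))
    push_cast at hc
    rw [show 2 * Real.pi * (n : ℝ) * (m : ℝ) / q = 2 * Real.pi * ((n * m : ℤ) : ℝ) / q by
      push_cast; ring, ofReal_cos_eq_stdAddChar, show c m = _ from hc]
    push_cast
    ring_nf
  have hsymm :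
      ∑ z, c z * stdAddChar (-((n : ZMod q) * z)) =
        ∑ z, c z * stdAddChar ((n : ZMod q) * z) := by
    rw [← Equiv.sum_comp (Equiv.neg (ZMod q))]
    simp only [c, Equiv.neg_apply, neg_sq, mul_neg, neg_neg]
  simp only [hterm, sum_range_natCast fun z => (c z * stdAddChar ((n : ZMod q) * z) +
    c z * stdAddChar (-((n : ZMod q) * z))) / 2, ← sum_div, sum_add_distrib, hsymm]
  ring

end ZMod

theorem circulant_floquet_factor_unitary_general
    (p q : ℕ) (hq : 0 < q)
    (γ : ℤ → ℂ)
    (hγ : ∀ n : ℤ, γ n = (1 / (q : ℂ)) * ∑ m ∈ Finset.range q,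
      Complex.exp (-2 * (Real.pi : ℂ) * Complex.I * (m : ℂ)^2 * (p : ℂ) / (q : ℂ))
        * ((Real.cos (2 * Real.pi * (n : ℝ) * (m : ℝ) / (q : ℝ)) : ℝ) : ℂ))
    (Γ : Matrix (Fin q) (Fin q) ℂ)
    (hΓ : ∀ i j : Fin q, Γ i j = γ ((j : ℤ) - (i : ℤ))) :
    Γ * Γ.conjTranspose = 1 := by
  have : NeZero q := ⟨hq.ne'⟩
  set ψ : AddChar (ZMod q) ℂ := ZMod.stdAddChar
  set c : ZMod q → ℂ := fun z => ψ (-((p : ZMod q) * z ^ 2))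
  set e : Fin q ≃ ZMod q := (ZMod.finEquiv q).toEquiv
  have he (i : Fin q) : e i = ((i : ℕ) : ZMod q) := ZMod.finEquiv_apply i
  have hΓ_eq : Γ = (ψ.fourierMultiplierMatrix c).submatrix e e := by
    ext i j
    rw [hΓ, hγ, ZMod.sum_range_exp_mul_cos_eq_sum_stdAddChar, submatrix_apply,
      AddChar.fourierMultiplierMatrix_apply, ZMod.card, one_div]
    simp only [he, c, ψ, Int.cast_sub, Int.cast_natCast]
  have hM := mem_unitaryGroup_iff.mp <| AddChar.fourierMultiplierMatrix_mem_unitaryGroup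
    (ZMod.isPrimitive_stdAddChar q) fun z => ψ.apply_mem_unitary (-((p : ZMod q) * z ^ 2))
  rw [hΓ_eq, conjTranspose_submatrix, submatrix_mul_equiv, ← star_eq_conjTranspose, hM,
    submatrix_one_equiv]

/-- The circulant factor `Γ = (γ_{n−m})` of the resonant Floquet matrices of
the `(p,q)`-resonant quantum piecewise linear Fermi–Ulam accelerator is
unitary: `Γ·Γ* = 1`. -/
theorem circulant_floquet_factor_unitary
    (p q : ℕ) (hp : 0 < p) (hq : 0 < q) (hpq : Nat.Coprime p q)
    (γ : ℤ → ℂ)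
    (hγ : ∀ n : ℤ, γ n = (1 / (q : ℂ)) * ∑ m ∈ Finset.range q,
      Complex.exp (-2 * (Real.pi : ℂ) * Complex.I * (m : ℂ)^2 * (p : ℂ) / (q : ℂ))
        * ((Real.cos (2 * Real.pi * (n : ℝ) * (m : ℝ) / (q : ℝ)) : ℝ) : ℂ))
    (Γ : Matrix (Fin q) (Fin q) ℂ)
    (hΓ : ∀ i j : Fin q, Γ i j = γ ((j : ℤ) - (i : ℤ))) :
    Γ * Γ.conjTranspose = 1 :=
  circulant_floquet_factor_unitary_general p q hq γ hγ Γ hΓ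
end

section
/- Let q be a positive integer. Let ξ₀, …, ξ_{q−1} : [0,1] → ℝ be twice continuously differentiable, let Q : [0,1] → (q×q complex matrices) be twice continuously differentiable with Q(x) unitary for every x ∈ [0,1], and let Φ : [0,1] → ℂ^q be twice continuously differentiable with Φ(0) = Φ(1) = 0. For N ∈ ℕ define Φ_N(x) = Q(x)·diag(exp(i·N·ξ_j(x)))_j·Q(x)⁻¹·Φ(x) and E(N) = −(1/(2q))·∫₀¹ ⟨Φ_N(x), Φ_N''(x)⟩ dx, where ⟨u, v⟩ = Σ_j conj(u_j)·v_j and '' denotes the second derivative in x. Set 𝔞 = (1/(2q))·∫₀¹ Σ_{j=0}^{q−1} (ξ_j'(x))²·|(Q(x)⁻¹·Φ(x))_j|² dx. Then 𝔞 ≥ 0 and there exists a constant C ≥ 0 such that |E(N) − 𝔞·N²| ≤ C·(N + 1) for all N ∈ ℕ. -/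
/-! On `[0,1]` unitarity gives `Q⁻¹ = Qᴴ`, so `Φ_N = Q (e^{iNξ} ⊙ ψ)` with `ψ = Qᴴ Φ` independent
of `N`, and the right-hand side is a `C²` function on all of `ℝ`. Differentiating the phases twice,
`Φ_N''` is `(iN)² Q (ξ'² ⊙ e^{iNξ} ⊙ ψ)` plus terms of size `O(N)`. Since `Q` is unitary and the
phases have modulus one, the first term pairs with `Φ_N` to `-N² Σⱼ ξⱼ'² |ψⱼ|²`, which integrates
to `-2q𝔞N²`; the remainder is bounded by `C (N + 1)` uniformly on the compact interval. -/

open MeasureTheory intervalIntegral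

open Complex Matrix

section Calculus

variable {F : Type*} [NormedAddCommGroup F] [NormedSpace ℝ F] {f : ℝ → F}

theorem ContDiff.differentiable_deriv_of_two (hf : ContDiff ℝ 2 f) :
    Differentiable ℝ (deriv f) :=
  (hf.iterate_deriv' 1 1).differentiable one_ne_zero

theorem ContDiff.continuous_deriv_deriv (hf : ContDiff ℝ 2 f) :
    Continuous (deriv (deriv f)) :=
  (hf.iterate_deriv' 0 2).continuous

theorem deriv_deriv_sum {ι : Type*} {u : Finset ι} {f : ι → ℝ → F}
    (hf : ∀ i ∈ u, ContDiff ℝ 2 (f i)) (x : ℝ) :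
    deriv (deriv fun y => ∑ i ∈ u, f i y) x = ∑ i ∈ u, deriv (deriv (f i)) x := by
  have h := iteratedDeriv_sum (n := 2) (x := x) fun i hi => (hf i hi).contDiffAt
  simp only [iteratedDeriv_eq_iterate, Function.iterate_succ, Function.iterate_zero,
    Function.comp_apply, id] at h
  convert h using 3
  ext y
  simp

theorem deriv_deriv_apply {ι : Type*} [Fintype ι] {f : ℝ → ι → F} (hf : ContDiff ℝ 2 f)
    (x : ℝ) (i : ι) : deriv (deriv f) x i = deriv (deriv fun y => f y i) x := by
  have hi : ∀ i, ContDiff ℝ 2 fun y => f y i := contDiff_pi.mp hf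
  have h1 : deriv f = fun y i => deriv (fun y => f y i) y :=
    funext fun y => deriv_pi fun i => (hi i).differentiable two_ne_zero y
  rw [h1, deriv_pi fun i => (hi i).differentiable_deriv_of_two x]

end Calculus

theorem norm_sum_le_card_mul {ι E : Type*} [Fintype ι] [SeminormedAddCommGroup E] {f : ι → E}
    {C : ℝ} (h : ∀ i, ‖f i‖ ≤ C) : ‖∑ i, f i‖ ≤ Fintype.card ι * C :=
  (norm_sum_le_of_le _ fun i _ => h i).trans_eq (by simp)

theorem IsCompact.exists_bound_of_continuous_family {α ι E : Type*} [TopologicalSpace α]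
    [Fintype ι] [SeminormedAddCommGroup E] {K : Set α} (hK : IsCompact K) {f : ι → α → E}
    (hf : ∀ i, Continuous (f i)) : ∃ M, 0 ≤ M ∧ ∀ i, ∀ x ∈ K, ‖f i x‖ ≤ M := by
  obtain ⟨M, hM⟩ := hK.exists_bound_of_continuousOn (continuous_pi hf).continuousOn
  exact ⟨max M 0, le_max_right _ _, fun i x hx =>
    ((norm_le_pi_norm (fun i => f i x) i).trans (hM x hx)).trans (le_max_left _ _)⟩

noncomputable def energyPairing {n : Type*} [Fintype n] (u : ℝ → n → ℂ) (a b : ℝ) : ℂ :=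
  ∫ x in a..b, star (u x) ⬝ᵥ deriv (deriv u) x

theorem energyPairing_congr {n : Type*} [Fintype n] {f g : ℝ → n → ℂ} {a b : ℝ} (hab : a ≤ b)
    (h : Set.EqOn f g (Set.Icc a b)) : energyPairing f a b = energyPairing g a b := by
  refine integral_congr_Ioo_of_le hab fun x hx => ?_
  have hfg : f =ᶠ[nhds x] g := Filter.eventuallyEq_of_mem (Ioo_mem_nhds hx.1 hx.2)
    fun y hy => h (Set.Ioo_subset_Icc_self hy)
  rw [h (Set.Ioo_subset_Icc_self hx), hfg.deriv.deriv_eq]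

theorem norm_cexp_I_mul_ofReal_mul_ofReal (t s : ℝ) : ‖cexp (I * t * s)‖ = 1 := by
  rw [show I * t * s = ((t * s : ℝ) : ℂ) * I by push_cast; ring]
  exact norm_exp_ofReal_mul_I _

theorem contDiff_cexp_mul_ofReal {n : WithTop ℕ∞} {ζ : ℝ → ℝ} (c : ℂ) (hζ : ContDiff ℝ n ζ) :
    ContDiff ℝ n fun y => cexp (c * ζ y) :=
  (contDiff_const.mul (ofRealCLM.contDiff.comp hζ)).cexp

theorem hasDerivAt_mul_cexp {a : ℝ → ℂ} {a' : ℂ} {ζ : ℝ → ℝ} {ζ' x : ℝ} (c : ℂ)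
    (ha : HasDerivAt a a' x) (hζ : HasDerivAt ζ ζ' x) :
    HasDerivAt (fun y => a y * cexp (c * ζ y)) ((a' + c * ζ' * a x) * cexp (c * ζ x)) x :=
  (ha.fun_mul (hζ.ofReal_comp.const_mul c).cexp).congr_deriv (by ring)

theorem deriv_deriv_mul_cexp {a : ℝ → ℂ} {ζ : ℝ → ℝ} (ha : ContDiff ℝ 2 a)
    (hζ : ContDiff ℝ 2 ζ) (c : ℂ) (x : ℝ) :
    deriv (deriv fun y => a y * cexp (c * ζ y)) x =
      (deriv (deriv a) x + c * (deriv (deriv ζ) x * a x + 2 * deriv ζ x * deriv a x)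
        + c ^ 2 * deriv ζ x ^ 2 * a x) * cexp (c * ζ x) := by
  have ha' := ha.differentiable two_ne_zero
  have hζ' := hζ.differentiable two_ne_zero
  have h1 : deriv (fun y => a y * cexp (c * ζ y)) =
      fun y => (deriv a y + c * deriv ζ y * a y) * cexp (c * ζ y) :=
    funext fun y => (hasDerivAt_mul_cexp c (ha' y).hasDerivAt (hζ' y).hasDerivAt).deriv
  have h2 : HasDerivAt (fun y => deriv a y + c * deriv ζ y * a y)
      (deriv (deriv a) x + (c * deriv (deriv ζ) x * a x + c * deriv ζ x * deriv a x)) x :=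
    (ha.differentiable_deriv_of_two x).hasDerivAt.fun_add
      ((((hζ.differentiable_deriv_of_two x).hasDerivAt.ofReal_comp).const_mul c).fun_mul
        (ha' x).hasDerivAt)
  rw [h1, (hasDerivAt_mul_cexp c h2 (hζ' x).hasDerivAt).deriv]
  ring

namespace Matrix

variable {n R : Type*} [Fintype n] [DecidableEq n]

theorem star_mulVec_dotProduct_mulVec_of_star_mul_self [CommSemiring R] [StarRing R]
    {U : Matrix n n R} (hU : star U * U = 1) (v w : n → R) :
    star (U *ᵥ v) ⬝ᵥ (U *ᵥ w) = star v ⬝ᵥ w := by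
  rw [star_mulVec, ← dotProduct_mulVec, mulVec_mulVec, ← star_eq_conjTranspose, hU, one_mulVec]

theorem mul_diagonal_mul_inv_mulVec_of_star_mul_self [CommRing R] [StarRing R]
    {U : Matrix n n R} (hU : star U * U = 1) (d v : n → R) :
    (U * diagonal d * U⁻¹) *ᵥ v = U *ᵥ fun k => d k * (star U *ᵥ v) k := by
  rw [inv_eq_left_inv hU, ← mulVec_mulVec, ← mulVec_mulVec]
  congr 1
  ext k
  rw [mulVec_diagonal]

end Matrix

theorem contDiff_star_mulVec {n : Type*} [Fintype n] {k : WithTop ℕ∞}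
    {A : ℝ → Matrix n n ℂ} {v : ℝ → n → ℂ} (hA : ∀ i j, ContDiff ℝ k fun x => A x i j)
    (hv : ContDiff ℝ k v) : ContDiff ℝ k fun x => star (A x) *ᵥ v x :=
  contDiff_pi.mpr fun j => ContDiff.sum fun i _ =>
    (conjCLE.contDiff.comp (hA i j)).mul (contDiff_pi.mp hv i)

noncomputable section FloquetWave

variable {q : ℕ} (ξ : Fin q → ℝ → ℝ) (Q : ℝ → Matrix (Fin q) (Fin q) ℂ) (ψ : ℝ → Fin q → ℂ)

/-- For `ψ = Qᴴ Φ` this is `Φ_t` with `Q⁻¹` replaced by `Qᴴ`: the two agree wherever `Q` is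
unitary, and this one is smooth on all of `ℝ`. -/
def floquetWave (t x : ℝ) : Fin q → ℂ :=
  Q x *ᵥ fun k => cexp (I * t * ξ k x) * ψ x k

def waveAmplitude (j k : Fin q) (x : ℝ) : ℂ := Q x j k * ψ x k

def leadingDensity (x : ℝ) : ℝ := ∑ k, deriv (ξ k) x ^ 2 * ‖ψ x k‖ ^ 2

def floquetRemainder (t x : ℝ) : ℂ :=
  ∑ j, star (floquetWave ξ Q ψ t x j) *
    ∑ k, (deriv (deriv (waveAmplitude Q ψ j k)) x
      + I * t * (deriv (deriv (ξ k)) x * waveAmplitude Q ψ j k x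
        + 2 * deriv (ξ k) x * deriv (waveAmplitude Q ψ j k) x)) * cexp (I * t * ξ k x)

theorem floquetWave_apply (t x : ℝ) (j : Fin q) :
    floquetWave ξ Q ψ t x j = ∑ k, waveAmplitude Q ψ j k x * cexp (I * t * ξ k x) := by
  simp only [floquetWave, waveAmplitude, mulVec, dotProduct]
  exact Finset.sum_congr rfl fun k _ => by ring

variable {ξ Q ψ}

theorem contDiff_waveAmplitude (hQ : ∀ i j, ContDiff ℝ 2 fun x => Q x i j)
    (hψ : ContDiff ℝ 2 ψ) (j k : Fin q) : ContDiff ℝ 2 (waveAmplitude Q ψ j k) :=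
  (hQ j k).mul (contDiff_pi.mp hψ k)

theorem continuous_leadingDensity (hξ : ∀ k, ContDiff ℝ 2 (ξ k)) (hψ : ContDiff ℝ 2 ψ) :
    Continuous (leadingDensity ξ ψ) :=
  continuous_finsetSum _ fun k _ => (((hξ k).continuous_deriv one_le_two).pow 2).mul
    (((continuous_apply k).comp hψ.continuous).norm.pow 2)

theorem mul_diagonal_mul_inv_mulVec_eq_floquetWave {x : ℝ} (hU : star (Q x) * Q x = 1)
    (Φ : ℝ → Fin q → ℂ) (t : ℝ) :
    (Q x * diagonal (fun j => cexp (I * t * ξ j x)) * (Q x)⁻¹) *ᵥ Φ x =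
      floquetWave ξ Q (fun y => star (Q y) *ᵥ Φ y) t x := by
  rw [mul_diagonal_mul_inv_mulVec_of_star_mul_self hU]
  rfl

theorem norm_floquetRemainder_le {t x MA MP MB : ℝ}
    (hA : ∀ j k, ‖waveAmplitude Q ψ j k x‖ ≤ MA)
    (hP : ∀ j k, ‖deriv (deriv (waveAmplitude Q ψ j k)) x‖ ≤ MP)
    (hB : ∀ j k, ‖deriv (deriv (ξ k)) x * waveAmplitude Q ψ j k x
      + 2 * deriv (ξ k) x * deriv (waveAmplitude Q ψ j k) x‖ ≤ MB) :
    ‖floquetRemainder ξ Q ψ t x‖ ≤ q * (q * MA * (q * (MP + |t| * MB))) := by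
  have he : ∀ k, ‖cexp (I * t * ξ k x)‖ = 1 := fun k => norm_cexp_I_mul_ofReal_mul_ofReal _ _
  refine (norm_sum_le_card_mul fun j => ?_).trans_eq (by rw [Fintype.card_fin])
  have hW : ‖floquetWave ξ Q ψ t x j‖ ≤ q * MA := by
    rw [floquetWave_apply]
    refine (norm_sum_le_card_mul fun k => ?_).trans_eq (by rw [Fintype.card_fin])
    rw [norm_mul, he, mul_one]
    exact hA j k
  have hR : ‖∑ k, (deriv (deriv (waveAmplitude Q ψ j k)) x
      + I * t * (deriv (deriv (ξ k)) x * waveAmplitude Q ψ j k x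
        + 2 * deriv (ξ k) x * deriv (waveAmplitude Q ψ j k) x)) * cexp (I * t * ξ k x)‖
      ≤ q * (MP + |t| * MB) := by
    refine (norm_sum_le_card_mul fun k => ?_).trans_eq (by rw [Fintype.card_fin])
    rw [norm_mul, he, mul_one]
    refine (norm_add_le _ _).trans (add_le_add (hP j k) ?_)
    rw [norm_mul, norm_mul, norm_I, one_mul, norm_real, Real.norm_eq_abs]
    exact mul_le_mul_of_nonneg_left (hB j k) (abs_nonneg t)
  rw [norm_mul, norm_star]
  exact mul_le_mul hW hR (norm_nonneg _) ((norm_nonneg _).trans hW)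

variable (hξ : ∀ k, ContDiff ℝ 2 (ξ k)) (hQ : ∀ i j, ContDiff ℝ 2 fun x => Q x i j)
  (hψ : ContDiff ℝ 2 ψ)
include hξ hQ hψ

theorem contDiff_floquetWave (t : ℝ) : ContDiff ℝ 2 (floquetWave ξ Q ψ t) := by
  refine contDiff_pi.mpr fun j => ?_
  simp only [floquetWave_apply]
  exact ContDiff.sum fun k _ => (contDiff_waveAmplitude hQ hψ j k).mul
    (contDiff_cexp_mul_ofReal _ (hξ k))

theorem deriv_deriv_floquetWave_apply (t x : ℝ) (j : Fin q) :
    deriv (deriv (floquetWave ξ Q ψ t)) x j =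
      ∑ k, (deriv (deriv (waveAmplitude Q ψ j k)) x
        + I * t * (deriv (deriv (ξ k)) x * waveAmplitude Q ψ j k x
          + 2 * deriv (ξ k) x * deriv (waveAmplitude Q ψ j k) x)
        + (I * t) ^ 2 * deriv (ξ k) x ^ 2 * waveAmplitude Q ψ j k x) * cexp (I * t * ξ k x) := by
  rw [deriv_deriv_apply (contDiff_floquetWave hξ hQ hψ t)]
  simp only [floquetWave_apply]
  rw [deriv_deriv_sum fun k _ => (contDiff_waveAmplitude hQ hψ j k).mul
    (contDiff_cexp_mul_ofReal _ (hξ k))]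
  exact Finset.sum_congr rfl fun k _ =>
    deriv_deriv_mul_cexp (contDiff_waveAmplitude hQ hψ j k) (hξ k) _ x

theorem star_floquetWave_dotProduct_deriv_deriv {t x : ℝ} (hU : star (Q x) * Q x = 1) :
    star (floquetWave ξ Q ψ t x) ⬝ᵥ deriv (deriv (floquetWave ξ Q ψ t)) x =
      -((t ^ 2 * leadingDensity ξ ψ x : ℝ) : ℂ) + floquetRemainder ξ Q ψ t x := by
  set e : Fin q → ℂ := fun k => cexp (I * t * ξ k x)
  have hsplit : deriv (deriv (floquetWave ξ Q ψ t)) x =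
      (fun j => ∑ k, (deriv (deriv (waveAmplitude Q ψ j k)) x
        + I * t * (deriv (deriv (ξ k)) x * waveAmplitude Q ψ j k x
          + 2 * deriv (ξ k) x * deriv (waveAmplitude Q ψ j k) x)) * e k)
      + (I * t) ^ 2 • (Q x *ᵥ fun k => ((deriv (ξ k) x : ℝ) : ℂ) ^ 2 * (e k * ψ x k)) := by
    ext j
    simp only [deriv_deriv_floquetWave_apply hξ hQ hψ, Pi.add_apply, Pi.smul_apply, smul_eq_mul,
      mulVec, dotProduct, Finset.mul_sum, ← Finset.sum_add_distrib, waveAmplitude, e]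
    exact Finset.sum_congr rfl fun k _ => by ring
  -- unitarity of `Q` and `|e k| = 1` remove both the matrix and the phases from the `t²` term
  have hquad : star (floquetWave ξ Q ψ t x) ⬝ᵥ
      (Q x *ᵥ fun k => ((deriv (ξ k) x : ℝ) : ℂ) ^ 2 * (e k * ψ x k)) =
        (leadingDensity ξ ψ x : ℂ) := by
    rw [floquetWave, star_mulVec_dotProduct_mulVec_of_star_mul_self hU]
    simp only [dotProduct, Pi.star_apply, leadingDensity, ofReal_sum, ofReal_mul, ofReal_pow]
    refine Finset.sum_congr rfl fun k _ => ?_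
    rw [mul_left_comm, ← starRingEnd_apply, conj_mul', norm_mul,
      norm_cexp_I_mul_ofReal_mul_ofReal, one_mul]
  rw [hsplit, dotProduct_add, dotProduct_smul, hquad, floquetRemainder]
  simp only [dotProduct, Pi.star_apply, smul_eq_mul, mul_pow, I_sq]
  push_cast
  ring

theorem exists_bound_floquetRemainder {K : Set ℝ} (hK : IsCompact K) :
    ∃ C, 0 ≤ C ∧ ∀ t, ∀ x ∈ K, ‖floquetRemainder ξ Q ψ t x‖ ≤ C * (|t| + 1) := by
  have hamp := fun p : Fin q × Fin q => contDiff_waveAmplitude hQ hψ p.1 p.2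
  obtain ⟨MA, hMA, hA⟩ := hK.exists_bound_of_continuous_family fun p => (hamp p).continuous
  obtain ⟨MP, hMP, hP⟩ := hK.exists_bound_of_continuous_family fun p =>
    (hamp p).continuous_deriv_deriv
  obtain ⟨MB, hMB, hB⟩ := hK.exists_bound_of_continuous_family fun p : Fin q × Fin q =>
    ((continuous_ofReal.comp (hξ p.2).continuous_deriv_deriv).mul (hamp p).continuous).add
      ((continuous_const.mul (continuous_ofReal.comp ((hξ p.2).continuous_deriv one_le_two))).mul
        ((hamp p).continuous_deriv one_le_two))
  refine ⟨q * (q * MA * (q * (MP + MB))), by positivity, fun t x hx => ?_⟩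
  refine (norm_floquetRemainder_le (fun j k => hA (j, k) x hx) (fun j k => hP (j, k) x hx)
    (fun j k => hB (j, k) x hx)).trans ?_
  have : MP + |t| * MB ≤ (MP + MB) * (|t| + 1) := by nlinarith [abs_nonneg t]
  calc (q : ℝ) * (q * MA * (q * (MP + |t| * MB)))
      ≤ q * (q * MA * (q * ((MP + MB) * (|t| + 1)))) := by gcongr
    _ = q * (q * MA * (q * (MP + MB))) * (|t| + 1) := by ring

theorem exists_bound_energyPairing_floquetWave {a b : ℝ} (hab : a ≤ b)
    (hU : ∀ x ∈ Set.Icc a b, star (Q x) * Q x = 1) :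
    ∃ C, 0 ≤ C ∧ ∀ t : ℝ, ‖energyPairing (floquetWave ξ Q ψ t) a b
      + ((t ^ 2 * ∫ x in a..b, leadingDensity ξ ψ x : ℝ) : ℂ)‖ ≤ C * (|t| + 1) := by
  obtain ⟨C, hC, hrem⟩ :=
    exists_bound_floquetRemainder hξ hQ hψ (isCompact_Icc (a := a) (b := b))
  refine ⟨C * (b - a), mul_nonneg hC (sub_nonneg.mpr hab), fun t => ?_⟩
  have hW := contDiff_floquetWave hξ hQ hψ t
  have hS : Continuous fun x => ((t ^ 2 * leadingDensity ξ ψ x : ℝ) : ℂ) :=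
    continuous_ofReal.comp (continuous_const.mul (continuous_leadingDensity hξ hψ))
  rw [energyPairing, ← intervalIntegral.integral_const_mul, ← intervalIntegral.integral_ofReal,
    ← intervalIntegral.integral_add
      ((hW.continuous.star.dotProduct hW.continuous_deriv_deriv).intervalIntegrable a b)
      (hS.intervalIntegrable a b)]
  refine (intervalIntegral.norm_integral_le_of_norm_le_const (C := C * (|t| + 1))
    fun x hx => ?_).trans_eq (by rw [abs_of_nonneg (sub_nonneg.mpr hab)]; ring)
  have hx : x ∈ Set.Icc a b := Set.Ioc_subset_Icc_self (by rwa [Set.uIoc_of_le hab] at hx)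
  rw [star_floquetWave_dotProduct_deriv_deriv hξ hQ hψ (hU x hx), neg_add_cancel_comm]
  exact hrem t x hx

end FloquetWave

theorem quadratic_energy_growth_general
    (q : ℕ)
    (ξ : Fin q → ℝ → ℝ) (hξ : ∀ j, ContDiff ℝ 2 (ξ j))
    (Q : ℝ → Matrix (Fin q) (Fin q) ℂ)
    (hQsmooth : ∀ i j : Fin q, ContDiff ℝ 2 (fun x => Q x i j))
    (hQunit : ∀ x ∈ Set.Icc (0:ℝ) 1, Q x ∈ Matrix.unitaryGroup (Fin q) ℂ)
    (Φ : ℝ → (Fin q → ℂ)) (hΦsmooth : ContDiff ℝ 2 Φ)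
    (ΦN : ℕ → ℝ → (Fin q → ℂ))
    (hΦN : ∀ (N : ℕ) (x : ℝ), ΦN N x =
      (Q x * Matrix.diagonal (fun j => Complex.exp (Complex.I * (N : ℂ) * (ξ j x : ℂ)))
        * (Q x)⁻¹).mulVec (Φ x))
    (E : ℕ → ℂ)
    (hE : ∀ N : ℕ, E N = -(1 / (2 * (q : ℂ))) *
      ∫ x in (0:ℝ)..1, ∑ j, (starRingEnd ℂ) (ΦN N x j) * deriv (deriv (ΦN N)) x j)
    (𝔞 : ℝ)
    (h𝔞 : 𝔞 = (1 / (2 * (q : ℝ))) *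
      ∫ x in (0:ℝ)..1, ∑ j, (deriv (ξ j) x)^2 * ‖((Q x)⁻¹).mulVec (Φ x) j‖^2) :
    0 ≤ 𝔞 ∧ ∃ C : ℝ, 0 ≤ C ∧ ∀ N : ℕ,
      ‖E N - (𝔞 : ℂ) * (N : ℂ)^2‖ ≤ C * ((N : ℝ) + 1) := by
  set ψ : ℝ → Fin q → ℂ := fun x => star (Q x) *ᵥ Φ x
  have hU : ∀ x ∈ Set.Icc (0:ℝ) 1, star (Q x) * Q x = 1 := fun x hx =>
    mem_unitaryGroup_iff'.mp (hQunit x hx)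
  have hE' : ∀ N : ℕ, E N = -(1 / (2 * q)) * energyPairing (floquetWave ξ Q ψ N) 0 1 := by
    refine fun N => (hE N).trans (congrArg _ (energyPairing_congr zero_le_one fun x hx => ?_))
    rw [hΦN, ← ofReal_natCast, mul_diagonal_mul_inv_mulVec_eq_floquetWave (hU x hx)]
  have h𝔞' : 𝔞 = 1 / (2 * q) * ∫ x in (0:ℝ)..1, leadingDensity ξ ψ x := by
    rw [h𝔞]
    congr 1
    refine integral_congr fun x hx => ?_
    rw [Set.uIcc_of_le zero_le_one] at hx
    simp only [leadingDensity, ψ, inv_eq_left_inv (hU x hx)]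
  obtain ⟨C, hC, hbound⟩ := exists_bound_energyPairing_floquetWave hξ hQsmooth
    (contDiff_star_mulVec hQsmooth hΦsmooth) zero_le_one hU
  refine ⟨?_, C / (2 * q), by positivity, fun N => ?_⟩
  · rw [h𝔞]
    exact mul_nonneg (by positivity) (integral_nonneg zero_le_one fun x _ => by positivity)
  have hgap : E N - 𝔞 * (N : ℂ) ^ 2 = -(1 / (2 * q)) * (energyPairing (floquetWave ξ Q ψ N) 0 1
      + (((N : ℝ) ^ 2 * ∫ x in (0:ℝ)..1, leadingDensity ξ ψ x : ℝ) : ℂ)) := by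
    rw [hE', h𝔞']
    push_cast
    ring
  rw [hgap, norm_mul, norm_neg, show ‖1 / (2 * (q : ℂ))‖ = 1 / (2 * q) by simp]
  calc _ ≤ 1 / (2 * q) * (C * (|(N : ℝ)| + 1)) := by gcongr; exact hbound N
    _ = C / (2 * q) * (N + 1) := by rw [Nat.abs_cast]; ring

/-- Quadratic energy growth theorem for the `(p,q)`-resonant quantum piecewise
linear Fermi–Ulam accelerator: with the Floquet eigendecomposition
`Q(x)·diag(exp(iNξⱼ(x)))·Q(x)⁻¹` applied to the wave `Φ`, the energy
`E(N) = −(1/(2q))∫₀¹⟨Φ_N, Φ_N''⟩` satisfies `E(N) = 𝔞N² + O(N)` with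
nonnegative leading coefficient `𝔞 = (1/(2q))∫₀¹ Σⱼ(ξⱼ')²|(Q⁻¹Φ)ⱼ|²`. -/
theorem quadratic_energy_growth
    (q : ℕ) (hq : 0 < q)
    (ξ : Fin q → ℝ → ℝ) (hξ : ∀ j, ContDiff ℝ 2 (ξ j))
    (Q : ℝ → Matrix (Fin q) (Fin q) ℂ)
    (hQsmooth : ∀ i j : Fin q, ContDiff ℝ 2 (fun x => Q x i j))
    (hQunit : ∀ x ∈ Set.Icc (0:ℝ) 1, Q x ∈ Matrix.unitaryGroup (Fin q) ℂ)
    (Φ : ℝ → (Fin q → ℂ)) (hΦsmooth : ContDiff ℝ 2 Φ)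
    (hΦ0 : Φ 0 = 0) (hΦ1 : Φ 1 = 0)
    (ΦN : ℕ → ℝ → (Fin q → ℂ))
    (hΦN : ∀ (N : ℕ) (x : ℝ), ΦN N x =
      (Q x * Matrix.diagonal (fun j => Complex.exp (Complex.I * (N : ℂ) * (ξ j x : ℂ)))
        * (Q x)⁻¹).mulVec (Φ x))
    (E : ℕ → ℂ)
    (hE : ∀ N : ℕ, E N = -(1 / (2 * (q : ℂ))) *
      ∫ x in (0:ℝ)..1, ∑ j, (starRingEnd ℂ) (ΦN N x j) * deriv (deriv (ΦN N)) x j)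
    (𝔞 : ℝ)
    (h𝔞 : 𝔞 = (1 / (2 * (q : ℝ))) *
      ∫ x in (0:ℝ)..1, ∑ j, (deriv (ξ j) x)^2 * ‖((Q x)⁻¹).mulVec (Φ x) j‖^2) :
    0 ≤ 𝔞 ∧ ∃ C : ℝ, 0 ≤ C ∧ ∀ N : ℕ,
      ‖E N - (𝔞 : ℂ) * (N : ℂ)^2‖ ≤ C * ((N : ℝ) + 1) :=
  quadratic_energy_growth_general q ξ hξ Q hQsmooth hQunit Φ hΦsmooth ΦN hΦN E hE 𝔞 h𝔞
end

section
/- Let c ∈ ℝ and let φ : ℝ → ℂ be twice continuously differentiable with φ(0) = 0 and φ(1) = 0. For N ∈ ℕ set ψ_N(x) = exp(i·N·c·x²)·φ(x) and E(N) = −(1/2)·∫₀¹ conj(ψ_N(x))·ψ_N''(x) dx. Then for all N ∈ ℕ: E(N) = (2c²·∫₀¹ x²·|φ(x)|² dx)·N² + (2c·Im ∫₀¹ x·conj(φ(x))·φ'(x) dx)·N + E(0). In particular E(N) is a quadratic polynomial in N with nonnegative leading coefficient 2c²·∫₀¹ x²|φ(x)|² dx. -/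
/-!
Since `|exp(iax²)| = 1`, the phase cancels in `conj ψ · ψ''` for `ψ = exp(iax²) φ`, leaving
`conj φ · φ'' + 4iax conj φ · φ' + (2ia − 4a²x²)|φ|²`. Integrating
`(x|φ|²)' = |φ|² + 2x Re(conj φ · φ')` over `[0, 1]`, where the boundary term vanishes because
`φ 1 = 0`, gives `∫|φ|² = −2 Re ∫ x conj φ · φ'`, so the terms linear in `a` combine to
`−4a Im ∫ x conj φ · φ'`. With `a = Nc` the energy is therefore a quadratic polynomial in `N`.
-/

open MeasureTheory intervalIntegral Complex ComplexConjugate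

section
variable (a : ℝ) {φ : ℝ → ℂ}

theorem HasDerivAt.cexp_I_mul_sq_mul {φ' : ℂ} {x : ℝ} (hφ : HasDerivAt φ φ' x) :
    HasDerivAt (fun x : ℝ => cexp (I * a * x ^ 2) * φ x)
      (cexp (I * a * x ^ 2) * (φ' + 2 * I * a * x * φ x)) x := by
  have hphase := (((hasDerivAt_pow 2 (x : ℂ)).const_mul (I * a)).comp_ofReal).cexp
  refine (hphase.mul hφ).congr_deriv ?_
  push_cast
  ring

theorem deriv_cexp_I_mul_sq_mul (hφ : Differentiable ℝ φ) :
    deriv (fun x : ℝ => cexp (I * a * x ^ 2) * φ x) =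
      fun x : ℝ => cexp (I * a * x ^ 2) * (deriv φ x + 2 * I * a * x * φ x) :=
  funext fun x => ((hφ x).hasDerivAt.cexp_I_mul_sq_mul a).deriv

theorem deriv_deriv_cexp_I_mul_sq_mul (hφ : Differentiable ℝ φ)
    (hφ' : Differentiable ℝ (deriv φ)) :
    deriv (deriv (fun x : ℝ => cexp (I * a * x ^ 2) * φ x)) =
      fun x : ℝ => cexp (I * a * x ^ 2) * (deriv (deriv φ) x + 4 * I * a * x * deriv φ x
        + (2 * I * a - 4 * a ^ 2 * x ^ 2) * φ x) := by
  rw [deriv_cexp_I_mul_sq_mul a hφ]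
  funext x
  have hχ : HasDerivAt (fun y : ℝ => deriv φ y + 2 * I * a * y * φ y)
      (deriv (deriv φ) x + 2 * I * a * (φ x + x * deriv φ x)) x := by
    have hx := (((hasDerivAt_id x).ofReal_comp).const_mul (2 * I * a)).mul (hφ x).hasDerivAt
    refine ((hφ' x).hasDerivAt.add hx).congr_deriv ?_
    simp only [id, ofReal_one]
    ring
  refine ((hχ.cexp_I_mul_sq_mul a).congr_deriv ?_).deriv
  linear_combination (4 * a ^ 2 * x ^ 2 * cexp (I * a * x ^ 2) * φ x) * I_sq

theorem conj_cexp_I_mul_sq_mul_self (x : ℝ) :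
    conj (cexp (I * a * x ^ 2)) * cexp (I * a * x ^ 2) = 1 := by
  rw [conj_mul', show I * a * (x : ℂ) ^ 2 = ((a * x ^ 2 : ℝ) : ℂ) * I by push_cast; ring,
    norm_exp_ofReal_mul_I, ofReal_one, one_pow]

theorem conj_mul_deriv_deriv_cexp_I_mul_sq_mul (hφ : Differentiable ℝ φ)
    (hφ' : Differentiable ℝ (deriv φ)) (x : ℝ) :
    conj (cexp (I * a * x ^ 2) * φ x) * deriv (deriv (fun x : ℝ => cexp (I * a * x ^ 2) * φ x)) x
      = conj (φ x) * deriv (deriv φ) x + 4 * I * a * (x * conj (φ x) * deriv φ x)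
        + 2 * I * a * ((‖φ x‖ ^ 2 : ℝ) : ℂ) - 4 * a ^ 2 * ((x ^ 2 * ‖φ x‖ ^ 2 : ℝ) : ℂ) := by
  rw [deriv_deriv_cexp_I_mul_sq_mul a hφ hφ', map_mul]
  push_cast
  linear_combination (conj (φ x) * (deriv (deriv φ) x + 4 * I * a * x * deriv φ x
        + (2 * I * a - 4 * a ^ 2 * x ^ 2) * φ x)) * conj_cexp_I_mul_sq_mul_self a x
    + (2 * I * a - 4 * a ^ 2 * x ^ 2) * conj_mul' (φ x)

end

theorem integral_norm_sq_eq_neg_two_mul_re {φ : ℝ → ℂ} {b : ℝ} (hφ : ContDiff ℝ 1 φ)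
    (hb : φ b = 0) :
    ∫ x in (0:ℝ)..b, ‖φ x‖ ^ 2 = -2 * (∫ x in (0:ℝ)..b, (x : ℂ) * conj (φ x) * deriv φ x).re := by
  have hdiff := hφ.differentiable one_ne_zero
  have hcont := hφ.continuous
  have hcont' := hφ.continuous_deriv le_rfl
  have hderiv : ∀ x, HasDerivAt (fun x => x * ‖φ x‖ ^ 2)
      (‖φ x‖ ^ 2 + 2 * ((x : ℂ) * conj (φ x) * deriv φ x).re) x := by
    intro x
    refine ((hasDerivAt_id x).mul (hdiff x).hasDerivAt.norm_sq).congr_deriv ?_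
    rw [Complex.inner, mul_assoc, re_ofReal_mul, mul_comm (deriv φ x), id]
    ring
  have hre : ∫ x in (0:ℝ)..b, ((x : ℂ) * conj (φ x) * deriv φ x).re =
      (∫ x in (0:ℝ)..b, (x : ℂ) * conj (φ x) * deriv φ x).re :=
    intervalIntegral_re (f := fun x : ℝ => (x : ℂ) * conj (φ x) * deriv φ x)
      (Continuous.intervalIntegrable (by fun_prop) _ _)
  have hftc := integral_eq_sub_of_hasDerivAt (a := 0) (b := b) (fun x _ => hderiv x)
    (Continuous.intervalIntegrable (by fun_prop) _ _)
  rw [integral_add (Continuous.intervalIntegrable (by fun_prop) _ _)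
      (Continuous.intervalIntegrable (by fun_prop) _ _), intervalIntegral.integral_const_mul,
    hre, hb, norm_zero] at hftc
  linarith

theorem integral_conj_mul_deriv_deriv_cexp_I_mul_sq_mul (a : ℝ) {φ : ℝ → ℂ} {b : ℝ}
    (hφ : ContDiff ℝ 2 φ) (hb : φ b = 0) :
    ∫ x in (0:ℝ)..b, conj (cexp (I * a * x ^ 2) * φ x) *
        deriv (deriv (fun x : ℝ => cexp (I * a * x ^ 2) * φ x)) x
      = (∫ x in (0:ℝ)..b, conj (φ x) * deriv (deriv φ) x)
        - 4 * a * (∫ x in (0:ℝ)..b, (x : ℂ) * conj (φ x) * deriv φ x).im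
        - 4 * a ^ 2 * ((∫ x in (0:ℝ)..b, x ^ 2 * ‖φ x‖ ^ 2 : ℝ) : ℂ) := by
  have hdiff := hφ.differentiable two_ne_zero
  have hdiff' := hφ.deriv'.differentiable one_ne_zero
  have hcont := hφ.continuous
  have hcont' := hφ.continuous_deriv one_le_two
  have hcont'' := hφ.deriv'.continuous_deriv le_rfl
  rw [integral_congr fun x _ => conj_mul_deriv_deriv_cexp_I_mul_sq_mul a hdiff hdiff' x,
    integral_sub (Continuous.intervalIntegrable (by fun_prop) _ _)
      (Continuous.intervalIntegrable (by fun_prop) _ _),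
    integral_add (Continuous.intervalIntegrable (by fun_prop) _ _)
      (Continuous.intervalIntegrable (by fun_prop) _ _),
    integral_add (Continuous.intervalIntegrable (by fun_prop) _ _)
      (Continuous.intervalIntegrable (by fun_prop) _ _),
    intervalIntegral.integral_const_mul, intervalIntegral.integral_const_mul,
    intervalIntegral.integral_const_mul, integral_ofReal, integral_ofReal,
    integral_norm_sq_eq_neg_two_mul_re (hφ.of_le one_le_two) hb]
  set J := ∫ x in (0:ℝ)..b, (x : ℂ) * conj (φ x) * deriv φ x
  push_cast
  linear_combination (4 * I * a) * (re_add_im J).symm + 4 * a * J.im * I_sq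

theorem seba_energy_growth_general
    (c : ℝ) (φ : ℝ → ℂ) (hφ : ContDiff ℝ 2 φ)
    (h1 : φ 1 = 0)
    (ψ : ℕ → ℝ → ℂ)
    (hψ : ∀ (N : ℕ) (x : ℝ), ψ N x = Complex.exp (Complex.I * (N : ℂ) * (c : ℂ) * (x : ℂ)^2) * φ x)
    (E : ℕ → ℂ)
    (hE : ∀ N : ℕ, E N = -(1/2 : ℂ) *
      ∫ x in (0:ℝ)..1, (starRingEnd ℂ) (ψ N x) * deriv (deriv (ψ N)) x) :
    (∀ N : ℕ, E N =
      ((2 * c^2 * ∫ x in (0:ℝ)..1, x^2 * ‖φ x‖^2 : ℝ) : ℂ) * (N : ℂ)^2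
      + ((2 * c * (∫ x in (0:ℝ)..1, (x : ℂ) * (starRingEnd ℂ) (φ x) * deriv φ x).im : ℝ) : ℂ) * (N : ℂ)
      + E 0)
    ∧ 0 ≤ 2 * c^2 * ∫ x in (0:ℝ)..1, x^2 * ‖φ x‖^2 := by
  have hEN : ∀ N : ℕ, E N = -(1/2 : ℂ) * ((∫ x in (0:ℝ)..1, conj (φ x) * deriv (deriv φ) x)
      - 4 * ((N * c : ℝ) : ℂ) * (∫ x in (0:ℝ)..1, (x : ℂ) * conj (φ x) * deriv φ x).im
      - 4 * ((N * c : ℝ) : ℂ) ^ 2 * ((∫ x in (0:ℝ)..1, x ^ 2 * ‖φ x‖ ^ 2 : ℝ) : ℂ)) := by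
    intro N
    have hψN : ψ N = fun x : ℝ => cexp (I * ((N * c : ℝ) : ℂ) * x ^ 2) * φ x :=
      funext fun x => by rw [hψ]; push_cast; ring_nf
    rw [hE, hψN, ← integral_conj_mul_deriv_deriv_cexp_I_mul_sq_mul _ hφ h1]
  refine ⟨fun N => ?_,
    mul_nonneg (by positivity) (integral_nonneg zero_le_one fun x _ => by positivity)⟩
  rw [hEN N, hEN 0]
  push_cast
  ring

/-- Explicit energy growth formula in the `(1,1)`-resonance example of the
quantum piecewise linear Fermi–Ulam accelerator (the case studied by Šeba):
with `ψ_N(x) = exp(iNcx²)·φ(x)`, the energy `E(N) = −(1/2)∫₀¹ ψ̄_N ψ_N''` is a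
quadratic polynomial in `N` with nonnegative leading coefficient
`2c²∫₀¹ x²|φ(x)|² dx`. -/
theorem seba_energy_growth
    (c : ℝ) (φ : ℝ → ℂ) (hφ : ContDiff ℝ 2 φ)
    (h0 : φ 0 = 0) (h1 : φ 1 = 0)
    (ψ : ℕ → ℝ → ℂ)
    (hψ : ∀ (N : ℕ) (x : ℝ), ψ N x = Complex.exp (Complex.I * (N : ℂ) * (c : ℂ) * (x : ℂ)^2) * φ x)
    (E : ℕ → ℂ)
    (hE : ∀ N : ℕ, E N = -(1/2 : ℂ) *
      ∫ x in (0:ℝ)..1, (starRingEnd ℂ) (ψ N x) * deriv (deriv (ψ N)) x) :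
    (∀ N : ℕ, E N =
      ((2 * c^2 * ∫ x in (0:ℝ)..1, x^2 * ‖φ x‖^2 : ℝ) : ℂ) * (N : ℂ)^2
      + ((2 * c * (∫ x in (0:ℝ)..1, (x : ℂ) * (starRingEnd ℂ) (φ x) * deriv φ x).im : ℝ) : ℂ) * (N : ℂ)
      + E 0)
    ∧ 0 ≤ 2 * c^2 * ∫ x in (0:ℝ)..1, x^2 * ‖φ x‖^2 :=
  seba_energy_growth_general c φ hφ h1 ψ hψ E hE
end
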